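/- arXiv:math/0410019 — 7 statements merged into one kernel-verified Lean document; each statement's English description precedes it below -/
import Mathlib

section
/- Let Y be a Hadamard space, p,q ∈ Y, c a nontrivial geodesic starting at p and c' a nontrivial geodesic starting at q. Then cos ∠_p(c, pq) = lim_{t→0} (d(p, c'(t)) − d(c(t), c'(t)))/t, where pq denotes the geodesic from p to q. -/
open Filter Metric Set Topology

/-- A Hadamard space: a complete metric space with midpoints satisfying the CN
(comparison) inequality of CAT(0) geometry. -/
class HadamardSpace (Y : Type*) [MetricSpace Y] : Prop where
  complete : CompleteSpace Y
  midpoints : ∀ x y : Y, ∃ m : Y, dist x m = dist x y / 2 ∧ dist m y = dist x y / 2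
  cn : ∀ x y z m : Y, dist y m = dist y z / 2 → dist m z = dist y z / 2 →
    dist x m ^ 2 ≤ dist x y ^ 2 / 2 + dist x z ^ 2 / 2 - dist y z ^ 2 / 4

/-- `c` is a unit-speed geodesic on the interval `[a, b]`. -/
def IsGeodesicOn {Y : Type*} [MetricSpace Y] (c : ℝ → Y) (a b : ℝ) : Prop :=
  ∀ s ∈ Set.Icc a b, ∀ t ∈ Set.Icc a b, dist (c s) (c t) = |s - t|

/-- The Euclidean comparison angle at `p` of the triangle `(p, x, y)`. -/
noncomputable def compAngle {Y : Type*} [MetricSpace Y] (p x y : Y) : ℝ :=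
  Real.arccos ((dist p x ^ 2 + dist p y ^ 2 - dist x y ^ 2) / (2 * dist p x * dist p y))

/-! Along a geodesic `γ` of a Hadamard space, `t ↦ d(x, γ t)² - t²` is convex (CN inequality
plus continuity), so the comparison cosines at `p` of two geodesics from `p` are antitone in both
parameters and converge to the cosine `M` of the Alexandrov angle; moreover
`(d(p, y) - d(c s, y)) / s → M` for every `y ≠ p` on the second geodesic.

With both endpoints moving, `d(c t, c' t) ≤ d(c t, m) + d(c' t, m)` through the midpoint `m`
of `pq` bounds the quotient from below, since the first variations of `c'` towards `m` and
towards `p` agree and cancel. The quadrilateral inequality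
`d(p, c' t)² + d(c t, q)² ≤ 2 t² + d(c t, c' t)² + d(p, q)²` bounds it from above by the first
variation of `c` towards `q`. -/

theorem nonpos_of_midpoint_convex {G : ℝ → ℝ} (hG : ContinuousOn G (Icc 0 1))
    (hmid : ∀ u ∈ Icc (0 : ℝ) 1, ∀ v ∈ Icc (0 : ℝ) 1, G ((u + v) / 2) ≤ (G u + G v) / 2)
    (h0 : G 0 ≤ 0) (h1 : G 1 ≤ 0) {l : ℝ} (hl : l ∈ Icc (0 : ℝ) 1) : G l ≤ 0 := by
  obtain ⟨l₀, hl₀, hmax⟩ := isCompact_Icc.exists_isMaxOn ⟨0, by norm_num⟩ hG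
  suffices G l₀ ≤ 0 from (hmax hl).trans this
  -- `l₀` is the midpoint of an endpoint of `[0, 1]` and a point where `G ≤ G l₀`.
  rcases le_total l₀ (1 / 2) with h | h
  · have h2 : 2 * l₀ ∈ Icc (0 : ℝ) 1 := ⟨by linarith [hl₀.1], by linarith⟩
    have := hmid 0 (by norm_num) _ h2
    rw [show (0 + 2 * l₀) / 2 = l₀ by ring] at this
    linarith [isMaxOn_iff.1 hmax _ h2]
  · have h2 : 2 * l₀ - 1 ∈ Icc (0 : ℝ) 1 := ⟨by linarith, by linarith [hl₀.2]⟩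
    have := hmid _ h2 1 (by norm_num)
    rw [show (2 * l₀ - 1 + 1) / 2 = l₀ by ring] at this
    linarith [isMaxOn_iff.1 hmax _ h2]

theorem convexOn_of_midpoint {s : Set ℝ} {f : ℝ → ℝ} (hs : Convex ℝ s) (hf : ContinuousOn f s)
    (hmid : ∀ x ∈ s, ∀ y ∈ s, f ((x + y) / 2) ≤ (f x + f y) / 2) : ConvexOn ℝ s f := by
  refine ⟨hs, fun x hx y hy α β hα hβ hαβ => ?_⟩
  have hseg : ∀ l ∈ Icc (0 : ℝ) 1, (1 - l) * x + l * y ∈ s := fun l hl =>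
    by simpa only [smul_eq_mul] using hs hx hy (sub_nonneg.2 hl.2) hl.1 (sub_add_cancel 1 l)
  have key := nonpos_of_midpoint_convex
    (G := fun l => f ((1 - l) * x + l * y) - ((1 - l) * f x + l * f y))
    ((hf.comp (by fun_prop) hseg).sub (by fun_prop))
    (fun u hu v hv => by
      have := hmid _ (hseg u hu) _ (hseg v hv)
      rw [show ((1 - u) * x + u * y + ((1 - v) * x + v * y)) / 2
        = (1 - (u + v) / 2) * x + (u + v) / 2 * y by ring] at this
      linarith)
    (by simp) (by simp) ⟨hβ, by linarith⟩
  obtain rfl : α = 1 - β := by linarith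
  simp only [smul_eq_mul]
  linarith

theorem tendsto_nhdsGT_prod_of_antitoneOn {f : ℝ → ℝ → ℝ} {a b M : ℝ} (ha : 0 < a)
    (hb : 0 < b)
    (hfs : ∀ τ ∈ Ioc 0 b, AntitoneOn (f · τ) (Ioc 0 a))
    (hft : ∀ s ∈ Ioc 0 a, AntitoneOn (f s) (Ioc 0 b))
    (hlim : ∀ τ ∈ Ioc 0 b, Tendsto (f · τ) (𝓝[>] 0) (𝓝 M)) :
    Tendsto (fun st : ℝ × ℝ => f st.1 st.2) (𝓝[>] 0 ×ˢ 𝓝[>] 0) (𝓝 M) := by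
  have hb' : b ∈ Ioc 0 b := ⟨hb, le_rfl⟩
  refine tendsto_order.2 ⟨fun x hx => ?_, fun x hx => ?_⟩
  · obtain ⟨s₀, hx₀, hs₀a⟩ :=
      (((hlim b hb').eventually (lt_mem_nhds hx)).and (Ioc_mem_nhdsGT ha)).exists
    filter_upwards [prod_mem_prod (Ioc_mem_nhdsGT hs₀a.1) (Ioc_mem_nhdsGT hb)]
      with ⟨s, τ⟩ ⟨hs, hτ⟩
    have hsa : s ∈ Ioc 0 a := ⟨hs.1, hs.2.trans hs₀a.2⟩
    calc x < f s₀ b := hx₀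
      _ ≤ f s b := hfs b hb' hsa hs₀a hs.2
      _ ≤ f s τ := hft s hsa hτ hb' hτ.2
  · filter_upwards [prod_mem_prod (Ioc_mem_nhdsGT ha) (Ioc_mem_nhdsGT hb)]
      with ⟨s, τ⟩ ⟨hs, hτ⟩
    refine lt_of_le_of_lt (ge_of_tendsto (hlim τ hτ) ?_) hx
    filter_upwards [Ioc_mem_nhdsGT hs.1] with s' hs'
    exact hfs τ hτ ⟨hs'.1, hs'.2.trans hs.2⟩ hs hs'.2

namespace IsGeodesicOn

variable {Y : Type*} [MetricSpace Y] {γ : ℝ → Y} {a b : ℝ}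

theorem dist_zero (h : IsGeodesicOn γ 0 b) {s : ℝ} (hs : s ∈ Icc 0 b) :
    dist (γ 0) (γ s) = s := by
  rw [h 0 ⟨le_rfl, hs.1.trans hs.2⟩ s hs, zero_sub, abs_neg, abs_of_nonneg hs.1]

theorem lipschitzOnWith (h : IsGeodesicOn γ a b) : LipschitzOnWith 1 γ (Icc a b) :=
  LipschitzOnWith.of_dist_le_mul fun s hs t ht => by simp [h s hs t ht, Real.dist_eq]

theorem tendsto_nhdsGT_zero (hb : 0 < b) (h : IsGeodesicOn γ 0 b) :
    Tendsto γ (𝓝[>] 0) (𝓝 (γ 0)) := by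
  have hcont := h.lipschitzOnWith.continuousOn.continuousWithinAt (left_mem_Icc.2 hb.le)
  rw [← nhdsWithin_Ioc_eq_nhdsGT hb]
  exact hcont.mono_left (nhdsWithin_mono _ Ioc_subset_Icc_self)

theorem reverse (h : IsGeodesicOn γ 0 b) : IsGeodesicOn (fun t => γ (b - t)) 0 b :=
  fun s hs t ht => by
    rw [h (b - s) ⟨by linarith [hs.2], by linarith [hs.1]⟩
      (b - t) ⟨by linarith [ht.2], by linarith [ht.1]⟩, sub_sub_sub_cancel_left, abs_sub_comm]

end IsGeodesicOn

section CompCos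

variable {Y : Type*} [MetricSpace Y]

noncomputable def compCos (p x y : Y) : ℝ :=
  (dist p x ^ 2 + dist p y ^ 2 - dist x y ^ 2) / (2 * dist p x * dist p y)

theorem compCos_comm (p x y : Y) : compCos p x y = compCos p y x := by
  simp only [compCos, dist_comm x y]
  ring

theorem compCos_mem_Icc (p x y : Y) : compCos p x y ∈ Icc (-1) 1 := by
  have h₁ := dist_triangle x p y
  have h₂ := dist_triangle p x y
  have h₃ := dist_triangle p y x
  rw [dist_comm x p] at h₁
  rw [dist_comm y x] at h₃
  rcases (mul_nonneg (dist_nonneg (x := p) (y := x)) (dist_nonneg (x := p) (y := y))).eq_or_lt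
    with h | h
  · simp [compCos, mul_assoc, ← h]
  · rw [compCos, mul_assoc, mem_Icc, le_div_iff₀ (by positivity), div_le_iff₀ (by positivity)]
    constructor <;> nlinarith [dist_nonneg (x := x) (y := y)]

theorem tendsto_sub_dist_div_of_tendsto_compCos {p y : Y} {c : ℝ → Y} {ε M : ℝ} (hε : 0 < ε)
    (hc : IsGeodesicOn c 0 ε) (hc0 : c 0 = p) (hy : y ≠ p)
    (h : Tendsto (fun s => compCos p (c s) y) (𝓝[>] 0) (𝓝 M)) :
    Tendsto (fun s => (dist p y - dist (c s) y) / s) (𝓝[>] 0) (𝓝 M) := by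
  set r := dist p y with hr_def
  have hr : 0 < r := dist_pos.2 hy.symm
  have hd : Tendsto (fun s => dist (c s) y) (𝓝[>] 0) (𝓝 r) := by
    simpa [hc0] using (hc.tendsto_nhdsGT_zero hε).dist tendsto_const_nhds
  have hid : Tendsto (fun s : ℝ => s) (𝓝[>] 0) (𝓝 0) := nhdsWithin_le_nhds
  have hlim : Tendsto (fun s => (2 * r * compCos p (c s) y - s) / (r + dist (c s) y)) (𝓝[>] 0)
      (𝓝 ((2 * r * M - 0) / (r + r))) :=
    ((h.const_mul _).sub hid).div (tendsto_const_nhds.add hd) (by positivity)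
  rw [show (2 * r * M - 0) / (r + r) = M by field_simp; ring] at hlim
  refine hlim.congr' ?_
  filter_upwards [Ioc_mem_nhdsGT hε] with s hs
  rw [compCos, ← hr_def, ← hc0, hc.dist_zero ⟨hs.1.le, hs.2⟩]
  have : 0 < r + dist (c s) y := by positivity
  have := hs.1.ne'
  field_simp
  ring

theorem dist_le_sub_mul_compCos_add {p x m : Y} {t δ : ℝ} (ht : 0 < t) (htδ : t < δ)
    (hx : dist p x = t) (hm : dist p m = δ) :
    dist x m ≤ δ - t * compCos p x m + t ^ 2 / (2 * (δ - t)) := by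
  obtain ⟨hu₁, hu₂⟩ := compCos_mem_Icc p x m
  set u := compCos p x m with hu_def
  have hu : dist x m ^ 2 = (δ - t * u) ^ 2 + t ^ 2 * (1 - u ^ 2) := by
    have : δ ≠ 0 := by linarith
    rw [hu_def, compCos, hx, hm]
    field_simp
    ring
  have hy : 0 < δ - t * u := by nlinarith
  -- `P - y ≤ (P² - y²) / (2 y)` for `P = dist x m` and `y = δ - t u > 0`.
  calc dist x m ≤ (δ - t * u) + t ^ 2 * (1 - u ^ 2) / (2 * (δ - t * u)) := by
        rw [← sub_le_iff_le_add', le_div_iff₀ (by positivity)]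
        nlinarith [sq_nonneg (dist x m - (δ - t * u))]
    _ ≤ δ - t * u + t ^ 2 / (2 * (δ - t)) := by
        gcongr <;> nlinarith

theorem sub_div_add_compCos_add_compCos_le {p q m x x' : Y} {t δ : ℝ} (ht : 0 < t)
    (htδ : t < δ) (hx : dist p x = t) (hx' : dist q x' = t) (hpm : dist p m = δ)
    (hqm : dist q m = δ) :
    -((2 * δ - dist p x') / t) + compCos p x m + compCos q x' m - t / (δ - t) ≤
      (dist p x' - dist x x') / t := by
  have hxm := dist_le_sub_mul_compCos_add ht htδ hx hpm
  have hx'm := dist_le_sub_mul_compCos_add ht htδ hx' hqm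
  have htri := dist_triangle x m x'
  rw [dist_comm m x'] at htri
  have hδt : 0 < δ - t := sub_pos.2 htδ
  rw [le_div_iff₀ ht]
  have : (-((2 * δ - dist p x') / t) + compCos p x m + compCos q x' m - t / (δ - t)) * t =
      dist p x' - 2 * δ + t * compCos p x m + t * compCos q x' m -
        2 * (t ^ 2 / (2 * (δ - t))) := by
    field_simp
    ring
  linarith

end CompCos

namespace HadamardSpace

variable {Y : Type*} [MetricSpace Y] [HadamardSpace Y]

theorem convexOn_dist_sq_sub_sq {γ : ℝ → Y} {a b : ℝ} (h : IsGeodesicOn γ a b) (x : Y) :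
    ConvexOn ℝ (Icc a b) (fun t => dist x (γ t) ^ 2 - t ^ 2) := by
  refine convexOn_of_midpoint (convex_Icc a b)
    (((continuous_const.dist continuous_id).comp_continuousOn
      h.lipschitzOnWith.continuousOn).pow 2 |>.sub (by fun_prop)) fun s hs t ht => ?_
  have hm : (s + t) / 2 ∈ Icc a b := ⟨by linarith [hs.1, ht.1], by linarith [hs.2, ht.2]⟩
  have hst := h s hs t ht
  have h₁ : dist (γ s) (γ ((s + t) / 2)) = dist (γ s) (γ t) / 2 := by
    rw [h s hs _ hm, hst, show s - (s + t) / 2 = (s - t) / 2 by ring, abs_div, abs_two]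
  have h₂ : dist (γ ((s + t) / 2)) (γ t) = dist (γ s) (γ t) / 2 := by
    rw [h _ hm t ht, hst, show (s + t) / 2 - t = (s - t) / 2 by ring, abs_div, abs_two]
  have hcn := HadamardSpace.cn x _ _ _ h₁ h₂
  rw [hst, sq_abs] at hcn
  linarith

theorem antitoneOn_compCos {p : Y} {γ : ℝ → Y} {b : ℝ} (h : IsGeodesicOn γ 0 b)
    (hγ0 : γ 0 = p) (y : Y) : AntitoneOn (fun s => compCos p (γ s) y) (Ioc 0 b) := by
  set φ := fun t => dist y (γ t) ^ 2 - t ^ 2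
  have hslope : ∀ s ∈ Ioc 0 b,
      compCos p (γ s) y = -((φ s - φ 0) / (s - 0)) / (2 * dist p y) := by
    intro s hs
    simp only [φ, compCos, ← hγ0, h.dist_zero ⟨hs.1.le, hs.2⟩, dist_comm y]
    ring
  intro s hs t ht hst
  simp only [hslope s hs, hslope t ht]
  refine div_le_div_of_nonneg_right (neg_le_neg ?_) (by positivity)
  exact (convexOn_dist_sq_sub_sq h y).secant_mono (left_mem_Icc.2 (hs.1.le.trans hs.2))
    ⟨hs.1.le, hs.2⟩ ⟨ht.1.le, ht.2⟩ hs.1.ne' ht.1.ne' hst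

theorem dist_sq_add_dist_sq_le (x₁ x₂ x₃ x₄ : Y) :
    dist x₁ x₃ ^ 2 + dist x₂ x₄ ^ 2 ≤
      dist x₁ x₂ ^ 2 + dist x₂ x₃ ^ 2 + dist x₃ x₄ ^ 2 + dist x₄ x₁ ^ 2 := by
  obtain ⟨m, hm₁, hm₂⟩ := HadamardSpace.midpoints x₂ x₄
  have h₁ := HadamardSpace.cn x₁ x₂ x₄ m hm₁ hm₂
  have h₃ := HadamardSpace.cn x₃ x₂ x₄ m hm₁ hm₂
  have htri := dist_triangle x₁ m x₃
  rw [dist_comm x₃ m] at h₃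
  rw [dist_comm x₄ x₁, dist_comm x₂ x₃]
  nlinarith [sq_nonneg (dist x₁ m - dist m x₃), dist_nonneg (x := x₁) (y := x₃)]

theorem exists_tendsto_compCos {p : Y} {c g : ℝ → Y} {ε L : ℝ} (hε : 0 < ε) (hL : 0 < L)
    (hc : IsGeodesicOn c 0 ε) (hc0 : c 0 = p) (hg : IsGeodesicOn g 0 L) (hg0 : g 0 = p) :
    ∃ M, Tendsto (fun st : ℝ × ℝ => compCos p (c st.1) (g st.2)) (𝓝[>] 0 ×ˢ 𝓝[>] 0) (𝓝 M) ∧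
      ∀ τ ∈ Ioc 0 L, Tendsto (fun s => compCos p (c s) (g τ)) (𝓝[>] 0) (𝓝 M) := by
  have hs τ : AntitoneOn (fun s => compCos p (c s) (g τ)) (Ioc 0 ε) :=
    antitoneOn_compCos hc hc0 (g τ)
  have ht s : AntitoneOn (fun τ => compCos p (c s) (g τ)) (Ioc 0 L) := by
    simpa only [compCos_comm p (c s)] using antitoneOn_compCos hg hg0 (c s)
  set N : ℝ → ℝ := fun τ => sSup ((fun s => compCos p (c s) (g τ)) '' Ioo 0 ε)
  have hN τ : Tendsto (fun s => compCos p (c s) (g τ)) (𝓝[>] 0) (𝓝 (N τ)) :=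
    ((hs τ).mono Ioo_subset_Ioc_self).tendsto_nhdsWithin_Ioo_right (nonempty_Ioo.2 hε)
      ⟨1, forall_mem_image.2 fun s _ => (compCos_mem_Icc _ _ _).2⟩
  have hfv : ∀ τ ∈ Ioc 0 L,
      Tendsto (fun s => (τ - dist (c s) (g τ)) / s) (𝓝[>] 0) (𝓝 (N τ)) := by
    intro τ hτ
    have hpg : dist p (g τ) = τ := by rw [← hg0]; exact hg.dist_zero ⟨hτ.1.le, hτ.2⟩
    have hgp : g τ ≠ p := fun h => by simp [h] at hpg; linarith [hτ.1]
    simpa only [hpg] using tendsto_sub_dist_div_of_tendsto_compCos hε hc hc0 hgp (hN τ)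
  have hL' : L ∈ Ioc 0 L := ⟨hL, le_rfl⟩
  -- `N` is antitone by monotonicity in `τ`, and monotone by the triangle inequality in the
  -- first variation formula, hence constant.
  have hNL : ∀ τ ∈ Ioc 0 L, N τ = N L := by
    intro τ hτ
    refine le_antisymm (le_of_tendsto_of_tendsto (hfv τ hτ) (hfv L hL') ?_)
      (le_of_tendsto_of_tendsto (hN L) (hN τ) ?_)
    · filter_upwards [self_mem_nhdsWithin] with s (hs : 0 < s)
      have htri := dist_triangle (c s) (g τ) (g L)
      rw [hg τ ⟨hτ.1.le, hτ.2⟩ L ⟨hL.le, le_rfl⟩, abs_sub_comm,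
        abs_of_nonneg (sub_nonneg.2 hτ.2)] at htri
      exact div_le_div_of_nonneg_right (by linarith) hs.le
    · filter_upwards [Ioc_mem_nhdsGT hε] with s _
      exact ht s hτ hL' hτ.2
  have hlim : ∀ τ ∈ Ioc 0 L, Tendsto (fun s => compCos p (c s) (g τ)) (𝓝[>] 0) (𝓝 (N L)) :=
    fun τ hτ => hNL τ hτ ▸ hN τ
  exact ⟨N L, tendsto_nhdsGT_prod_of_antitoneOn hε hL (fun τ _ => hs τ) (fun s _ => ht s) hlim,
    hlim⟩

theorem dist_sub_dist_div_mul_le {p q x x' : Y} {t : ℝ} (ht : 0 < t) (hx : dist p x = t)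
    (hx' : dist q x' = t) :
    (dist p x' - dist x x') / t * (dist x x' + dist p x') ≤
      (dist p q - dist x q) / t * (dist p q + dist x q) + 2 * t := by
  have hquad := dist_sq_add_dist_sq_le p x x' q
  rw [hx, dist_comm x' q, hx', dist_comm q p] at hquad
  calc (dist p x' - dist x x') / t * (dist x x' + dist p x')
      = (dist p x' ^ 2 - dist x x' ^ 2) / t := by ring
    _ ≤ (dist p q ^ 2 - dist x q ^ 2 + 2 * t ^ 2) / t := by gcongr; linarith
    _ = (dist p q - dist x q) / t * (dist p q + dist x q) + 2 * t := by field_simp; ring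

theorem tendsto_dist_sub_dist_div {p q m : Y} {c c' : ℝ → Y} {ε ε' M M' : ℝ} (hε : 0 < ε)
    (hc : IsGeodesicOn c 0 ε) (hc0 : c 0 = p) (hε' : 0 < ε') (hc' : IsGeodesicOn c' 0 ε')
    (hc'0 : c' 0 = q) (hpq : p ≠ q) (hpm : dist p m = dist p q / 2)
    (hqm : dist q m = dist p q / 2)
    (hcq : Tendsto (fun t => (dist p q - dist (c t) q) / t) (𝓝[>] 0) (𝓝 M))
    (hc'p : Tendsto (fun t => (dist q p - dist (c' t) p) / t) (𝓝[>] 0) (𝓝 M'))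
    (hcm : Tendsto (fun t => compCos p (c t) m) (𝓝[>] 0) (𝓝 M))
    (hc'm : Tendsto (fun t => compCos q (c' t) m) (𝓝[>] 0) (𝓝 M')) :
    Tendsto (fun t => (dist p (c' t) - dist (c t) (c' t)) / t) (𝓝[>] 0) (𝓝 M) := by
  set D := dist p q
  have hD : 0 < D := dist_pos.2 hpq
  have ht0 : Tendsto (fun t : ℝ => t) (𝓝[>] 0) (𝓝 0) := nhdsWithin_le_nhds
  have hct : Tendsto c (𝓝[>] 0) (𝓝 p) := hc0 ▸ hc.tendsto_nhdsGT_zero hε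
  have hc't : Tendsto c' (𝓝[>] 0) (𝓝 q) := hc'0 ▸ hc'.tendsto_nhdsGT_zero hε'
  have hev : ∀ᶠ t in 𝓝[>] (0 : ℝ),
      0 < t ∧ t < D / 2 ∧ dist p (c t) = t ∧ dist q (c' t) = t := by
    filter_upwards [Ioo_mem_nhdsGT (show 0 < min (min ε ε') (D / 2) by positivity)]
      with t ⟨ht, htε⟩
    simp only [lt_min_iff] at htε
    exact ⟨ht, htε.2, hc0 ▸ hc.dist_zero ⟨ht.le, htε.1.1.le⟩,
      hc'0 ▸ hc'.dist_zero ⟨ht.le, htε.1.2.le⟩⟩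
  refine tendsto_of_tendsto_of_tendsto_of_le_of_le' (g := fun t =>
      -((2 * (D / 2) - dist p (c' t)) / t) + compCos p (c t) m + compCos q (c' t) m -
        t / (D / 2 - t))
    (h := fun t => ((D - dist (c t) q) / t * (D + dist (c t) q) + 2 * t) /
      (dist (c t) (c' t) + dist p (c' t))) ?_ ?_ ?_ ?_
  · have hc'p' : Tendsto (fun t => (2 * (D / 2) - dist p (c' t)) / t) (𝓝[>] 0) (𝓝 M') := by
      rw [mul_div_cancel₀ D two_ne_zero]
      exact hc'p.congr fun t => by rw [dist_comm q p, dist_comm (c' t) p]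
    have herr : Tendsto (fun t => t / (D / 2 - t)) (𝓝[>] 0) (𝓝 (0 / (D / 2 - 0))) :=
      ht0.div (tendsto_const_nhds.sub ht0) (by simpa using hD.ne')
    simpa using ((hc'p'.neg.add hcm).add hc'm).sub herr
  · have hnum : Tendsto (fun t => (D - dist (c t) q) / t * (D + dist (c t) q) + 2 * t)
        (𝓝[>] 0) (𝓝 (M * (D + D) + 2 * 0)) :=
      (hcq.mul (tendsto_const_nhds.add (hct.dist tendsto_const_nhds))).add (ht0.const_mul 2)
    have hden : Tendsto (fun t => dist (c t) (c' t) + dist p (c' t)) (𝓝[>] 0) (𝓝 (D + D)) :=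
      (hct.dist hc't).add (tendsto_const_nhds.dist hc't)
    have h := hnum.div hden (by positivity)
    rwa [show (M * (D + D) + 2 * 0) / (D + D) = M by field_simp; ring] at h
  · filter_upwards [hev] with t ⟨ht, htD, hpc, hqc'⟩
    exact sub_div_add_compCos_add_compCos_le ht htD hpc hqc' hpm hqm
  · filter_upwards [hev] with t ⟨ht, htD, hpc, hqc'⟩
    have hpc' : 0 < dist p (c' t) := by
      have := dist_triangle p (c' t) q
      rw [dist_comm (c' t) q, hqc'] at this
      linarith
    rw [le_div_iff₀ (by positivity)]
    exact dist_sub_dist_div_mul_le ht hpc hqc'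

end HadamardSpace

/-- For geodesics `c` issuing from `p` and `c'` issuing from `q`, the Alexandrov angle
`θ = ∠_p(c, pq)` (the limit of comparison angles along the geodesic `pq`) satisfies
`cos θ = lim_{t→0} (d(p, c'(t)) − d(c(t), c'(t)))/t`. -/
theorem stmt2 {Y : Type*} [MetricSpace Y] [HadamardSpace Y] (p q : Y) (hq : q ≠ p)
    (c : ℝ → Y) (ε : ℝ) (hε : 0 < ε) (hc : IsGeodesicOn c 0 ε) (hc0 : c 0 = p)
    (c' : ℝ → Y) (ε' : ℝ) (hε' : 0 < ε') (hc' : IsGeodesicOn c' 0 ε') (hc'0 : c' 0 = q)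
    (g : ℝ → Y) (hg : IsGeodesicOn g 0 (dist p q)) (hg0 : g 0 = p)
    (hg1 : g (dist p q) = q) :
    ∃ θ : ℝ,
      Tendsto (fun tt : ℝ × ℝ => compAngle p (c tt.1) (g tt.2))
        ((𝓝[>] (0 : ℝ)) ×ˢ (𝓝[>] (0 : ℝ))) (𝓝 θ) ∧
      Tendsto (fun t : ℝ => (dist p (c' t) - dist (c t) (c' t)) / t) (𝓝[>] (0 : ℝ))
        (𝓝 (Real.cos θ)) := by
  set D := dist p q
  have hD : 0 < D := dist_pos.2 hq.symm
  have hDD : D ∈ Ioc 0 D := ⟨hD, le_rfl⟩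
  have hD2 : D / 2 ∈ Ioc 0 D := ⟨half_pos hD, half_le_self hD.le⟩
  obtain ⟨M, hMangle, hM⟩ := HadamardSpace.exists_tendsto_compCos hε hD hc hc0 hg hg0
  obtain ⟨M', -, hM'⟩ :=
    HadamardSpace.exists_tendsto_compCos hε' hD hc' hc'0 hg.reverse (by simpa using hg1)
  have hpm : dist p (g (D / 2)) = D / 2 := hg0 ▸ hg.dist_zero ⟨hD2.1.le, hD2.2⟩
  have hqm : dist q (g (D / 2)) = D / 2 := by
    simpa [sub_half, hg1] using hg.reverse.dist_zero ⟨hD2.1.le, hD2.2⟩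
  have hcq := tendsto_sub_dist_div_of_tendsto_compCos hε hc hc0 hq
    (by simpa [hg1] using hM D hDD)
  have hc'p := tendsto_sub_dist_div_of_tendsto_compCos hε' hc' hc'0 hq.symm
    (by simpa [hg0] using hM' D hDD)
  obtain ⟨hM₁, hM₂⟩ : M ∈ Icc (-1) 1 :=
    isClosed_Icc.mem_of_tendsto hMangle (Eventually.of_forall fun _ => compCos_mem_Icc _ _ _)
  refine ⟨Real.arccos M, (Real.continuous_arccos.tendsto M).comp hMangle, ?_⟩
  rw [Real.cos_arccos hM₁ hM₂]
  exact HadamardSpace.tendsto_dist_sub_dist_div hε hc hc0 hε' hc' hc'0 hq.symm hpm hqm hcq hc'p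
    (hM _ hD2) (by simpa [sub_half] using hM' _ hD2)
end

section
/- Let Y be a Hadamard space and G a finite group of isometries of Y fixing a point p ∈ Y. Then the fixed-point set (TC_pY)^G of the induced action of G on the tangent cone TC_pY equals the closure of the set ℝ₊·π_p(Y^G) = { t·V : t ≥ 0, V ∈ π_p(Y^G) }, where Y^G is the fixed-point set of G in Y and π_p : Y → TC_pY is the map q ↦ ([pq], d(p,q)). -/
open Filter Metric Set Topology

/-!
Approximate a `G`-fixed cone point `x` by a scaled direction `s • π q`. As that point is almost
fixed, so is the point at distance `e * s` along the geodesic from `p` to `q`, with displacement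
`O(e)` for small `e`. In a Hadamard space the CN inequality makes the largest squared distance to
a finite orbit uniformly convex, so it has a unique minimizer, the circumcenter; by uniqueness it
is fixed, and it lies within the displacement of the point. Geodesics issuing from `p` contract distances, so rescaling the circumcenter
by `e⁻¹` gives a fixed point of the cone close to `s • π q`.
-/

theorem cauchySeq_of_dist_sq_le {X : Type*} [PseudoMetricSpace X] {x : ℕ → X} {u : ℕ → ℝ}
    (hu : Tendsto u atTop (𝓝 0)) (hx : ∀ m n, dist (x m) (x n) ^ 2 ≤ u m + u n) :
    CauchySeq x := by
  refine Metric.cauchySeq_iff.2 fun ε hε => ?_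
  obtain ⟨N, hN⟩ := eventually_atTop.1 (hu.eventually_lt_const (half_pos (pow_pos hε 2)))
  refine ⟨N, fun m hm n hn => ?_⟩
  have hsq : dist (x m) (x n) ^ 2 < ε ^ 2 := by linarith [hx m n, hN m hm, hN n hn]
  exact (pow_lt_pow_iff_left₀ dist_nonneg hε.le two_ne_zero).1 hsq

section MaxDistSq

variable {X : Type*} [PseudoMetricSpace X] {ι : Type*} (z : ι → X)

noncomputable def maxDistSq (x : X) : ℝ := ⨆ i, dist x (z i) ^ 2

theorem maxDistSq_le [Nonempty ι] {x : X} {r : ℝ} (h : ∀ i, dist x (z i) ^ 2 ≤ r) :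
    maxDistSq z x ≤ r :=
  ciSup_le h

theorem dist_sq_le_maxDistSq [Finite ι] (x : X) (i : ι) : dist x (z i) ^ 2 ≤ maxDistSq z x :=
  le_ciSup (f := fun i => dist x (z i) ^ 2) (Finite.bddAbove_range _) i

end MaxDistSq

namespace HadamardSpace

variable {Y : Type*} [MetricSpace Y] [HadamardSpace Y]

instance : CompleteSpace Y := HadamardSpace.complete

theorem eq_of_dist_add_dist_eq {p q a b : Y} (hpq : dist p a + dist a q = dist p q)
    (hpb : dist p b = dist p a) (hbq : dist b q = dist a q) : a = b := by
  -- by CN the midpoint `m` of `a` and `b` is no farther than `a` from `p` and from `q`; the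
  -- triangle inequality through `m` forces `dist p m = dist p a`, and then CN forces `a = b`
  obtain ⟨m, ham, hmb⟩ := midpoints a b
  have hcn_p := cn p a b m ham hmb
  have hcn_q := cn q a b m ham hmb
  rw [hpb] at hcn_p
  rw [dist_comm q a, dist_comm q b, hbq] at hcn_q
  have hpm : dist p m ≤ dist p a := (pow_le_pow_iff_left₀ dist_nonneg dist_nonneg two_ne_zero).1
    (by linarith [sq_nonneg (dist a b)])
  have hqm : dist q m ≤ dist a q := (pow_le_pow_iff_left₀ dist_nonneg dist_nonneg two_ne_zero).1
    (by linarith [sq_nonneg (dist a b)])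
  have hpm_eq : dist p m = dist p a := by linarith [dist_triangle_right p q m]
  rw [hpm_eq] at hcn_p
  exact dist_le_zero.1 (by nlinarith [dist_nonneg (x := a) (y := b)])

variable {ι : Type*} [Finite ι] [Nonempty ι] {z : ι → Y}

theorem maxDistSq_midpoint_le {a b m : Y} (ham : dist a m = dist a b / 2)
    (hmb : dist m b = dist a b / 2) :
    maxDistSq z m ≤ maxDistSq z a / 2 + maxDistSq z b / 2 - dist a b ^ 2 / 4 :=
  maxDistSq_le z fun i => by
    have := cn (z i) a b m ham hmb
    simp only [dist_comm (z i)] at this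
    linarith [dist_sq_le_maxDistSq z a i, dist_sq_le_maxDistSq z b i]

theorem dist_sq_le_of_forall_le_maxDistSq {I : ℝ} (hI : ∀ x, I ≤ maxDistSq z x) (a b : Y) :
    dist a b ^ 2 ≤ 2 * (maxDistSq z a - I) + 2 * (maxDistSq z b - I) := by
  obtain ⟨m, ham, hmb⟩ := midpoints a b
  linarith [maxDistSq_midpoint_le (z := z) ham hmb, hI m]

theorem exists_forall_maxDistSq_le (z : ι → Y) :
    ∃ c, ∀ x, maxDistSq z c ≤ maxDistSq z x := by
  have hbdd : BddBelow (range (maxDistSq z)) :=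
    ⟨0, forall_mem_range.2 fun x =>
      (sq_nonneg _).trans (dist_sq_le_maxDistSq z x (Classical.arbitrary ι))⟩
  obtain ⟨u, -, hlim, hmem⟩ :=
    exists_seq_tendsto_sInf (range_nonempty_iff_nonempty.2 ⟨z (Classical.arbitrary ι)⟩) hbdd
  choose x hx using hmem
  set I := sInf (range (maxDistSq z))
  have hI : ∀ x, I ≤ maxDistSq z x := fun x => csInf_le hbdd ⟨x, rfl⟩
  obtain rfl : u = fun n => maxDistSq z (x n) := funext fun n => (hx n).symm
  have hgap : Tendsto (fun n => 2 * (maxDistSq z (x n) - I)) atTop (𝓝 0) := by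
    simpa only [sub_self, mul_zero] using (hlim.sub_const I).const_mul 2
  obtain ⟨c, hc⟩ := cauchySeq_tendsto_of_complete <|
    cauchySeq_of_dist_sq_le hgap fun m n => dist_sq_le_of_forall_le_maxDistSq hI (x m) (x n)
  refine ⟨c, fun y => le_trans (maxDistSq_le z fun i => ?_) (hI y)⟩
  exact le_of_tendsto_of_tendsto' ((hc.dist tendsto_const_nhds).pow 2) hlim
    fun n => dist_sq_le_maxDistSq z (x n) i

theorem eq_of_forall_maxDistSq_le {c c' : Y} (hc : ∀ x, maxDistSq z c ≤ maxDistSq z x)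
    (hc' : ∀ x, maxDistSq z c' ≤ maxDistSq z x) : c = c' := by
  have h := dist_sq_le_of_forall_le_maxDistSq hc c c'
  have : maxDistSq z c' = maxDistSq z c := le_antisymm (hc' c) (hc c')
  exact dist_le_zero.1 (by nlinarith [dist_nonneg (x := c) (y := c')])

theorem exists_fixed_point_dist_le {G : Type*} [Group G] [Finite G] [MulAction G Y]
    (hG : ∀ g : G, Isometry (fun y : Y => g • y)) (y : Y) {r : ℝ}
    (hr : ∀ g : G, dist y (g • y) ≤ r) :
    ∃ c : Y, (∀ g : G, g • c = c) ∧ dist c y ≤ r := by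
  let z : G → Y := fun g => g • y
  obtain ⟨c, hc⟩ := exists_forall_maxDistSq_le z
  -- `g₀ • c` is a minimizer as well, since `g₀` permutes the orbit
  have hfix (g₀ : G) : g₀ • c = c := by
    refine (eq_of_forall_maxDistSq_le hc fun x => (maxDistSq_le z fun g => ?_).trans (hc x)).symm
    have : g • y = g₀ • (g₀⁻¹ * g) • y := by rw [smul_smul, mul_inv_cancel_left]
    show dist (g₀ • c) (g • y) ^ 2 ≤ _
    rw [this, (hG g₀).dist_eq]
    exact dist_sq_le_maxDistSq z c _
  have hr0 : 0 ≤ r := dist_nonneg.trans (hr 1)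
  have hcy : dist c y ^ 2 ≤ r ^ 2 := calc
    dist c y ^ 2 = dist c ((1 : G) • y) ^ 2 := by rw [one_smul]
    _ ≤ maxDistSq z c := dist_sq_le_maxDistSq z c 1
    _ ≤ maxDistSq z y := hc y
    _ ≤ r ^ 2 := maxDistSq_le z fun g => pow_le_pow_left₀ dist_nonneg (hr g) 2
  exact ⟨c, hfix, (pow_le_pow_iff_left₀ dist_nonneg hr0 two_ne_zero).1 hcy⟩

end HadamardSpace

structure IsRadialGeodesics {Y : Type*} [MetricSpace Y] (p : Y) (γ : Y → ℝ → Y) : Prop where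
  apply_zero : ∀ q, γ q 0 = p
  apply_one : ∀ q, γ q 1 = q
  dist_apply_apply : ∀ q, ∀ τ ∈ Icc (0 : ℝ) 1, ∀ τ' ∈ Icc (0 : ℝ) 1,
    dist (γ q τ) (γ q τ') = |τ - τ'| * dist p q

namespace IsRadialGeodesics

variable {Y : Type*} [MetricSpace Y] {p : Y} {γ : Y → ℝ → Y} (hγ : IsRadialGeodesics p γ)
include hγ

theorem dist_base_apply (q : Y) {τ : ℝ} (hτ : τ ∈ Icc (0 : ℝ) 1) :
    dist p (γ q τ) = τ * dist p q := by
  have h := hγ.dist_apply_apply q 0 (left_mem_Icc.2 zero_le_one) τ hτ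
  rwa [hγ.apply_zero, zero_sub, abs_neg, abs_of_nonneg hτ.1] at h

theorem dist_apply_end (q : Y) {τ : ℝ} (hτ : τ ∈ Icc (0 : ℝ) 1) :
    dist (γ q τ) q = (1 - τ) * dist p q := by
  have h := hγ.dist_apply_apply q τ hτ 1 (right_mem_Icc.2 zero_le_one)
  rwa [hγ.apply_one, abs_sub_comm, abs_of_nonneg (sub_nonneg.2 hτ.2)] at h

variable [HadamardSpace Y]

theorem apply_mul (q : Y) {t τ : ℝ} (ht : t ∈ Icc (0 : ℝ) 1) (hτ : τ ∈ Icc (0 : ℝ) 1) :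
    γ q (t * τ) = γ (γ q τ) t := by
  have htτ : t * τ ∈ Icc (0 : ℝ) 1 :=
    ⟨mul_nonneg ht.1 hτ.1, mul_le_one₀ ht.2 hτ.1 hτ.2⟩
  have hmid : dist (γ q (t * τ)) (γ q τ) = (τ - t * τ) * dist p q := by
    rw [hγ.dist_apply_apply q _ htτ τ hτ, abs_sub_comm,
      abs_of_nonneg (by nlinarith [ht.2, hτ.1] : 0 ≤ τ - t * τ)]
  refine HadamardSpace.eq_of_dist_add_dist_eq (p := p) (q := γ q τ) ?_ ?_ ?_
  · rw [hγ.dist_base_apply q htτ, hmid, hγ.dist_base_apply q hτ]; ring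
  · rw [hγ.dist_base_apply _ ht, hγ.dist_base_apply q htτ, hγ.dist_base_apply q hτ]; ring
  · rw [hγ.dist_apply_end _ ht, hmid, hγ.dist_base_apply q hτ]; ring

theorem map_apply {f : Y → Y} (hf : Isometry f) (hfp : f p = p) (q : Y) {τ : ℝ}
    (hτ : τ ∈ Icc (0 : ℝ) 1) : f (γ q τ) = γ (f q) τ := by
  have hdist_base (y : Y) : dist p (f y) = dist p y := by rw [← hfp, hf.dist_eq, hfp]
  refine HadamardSpace.eq_of_dist_add_dist_eq (p := p) (q := f q) ?_ ?_ ?_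
  · rw [hdist_base, hf.dist_eq, hγ.dist_base_apply q hτ, hγ.dist_apply_end q hτ, hdist_base]
    ring
  · rw [hγ.dist_base_apply _ hτ, hdist_base, hdist_base, hγ.dist_base_apply q hτ]
  · rw [hγ.dist_apply_end _ hτ, hf.dist_eq, hγ.dist_apply_end q hτ, hdist_base]

theorem dist_apply_half_le (a b : Y) : dist (γ a (1 / 2)) (γ b (1 / 2)) ≤ dist a b / 2 := by
  have h : (1 / 2 : ℝ) ∈ Icc (0 : ℝ) 1 := by norm_num
  have hpa := hγ.dist_base_apply a h
  have hpb := hγ.dist_base_apply b h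
  have hcn_a := HadamardSpace.cn (γ b (1 / 2)) p a (γ a (1 / 2))
    (by rw [hpa]; ring) (by rw [hγ.dist_apply_end a h]; ring)
  have hcn_b := HadamardSpace.cn a p b (γ b (1 / 2))
    (by rw [hpb]; ring) (by rw [hγ.dist_apply_end b h]; ring)
  rw [dist_comm _ p, hpb, dist_comm _ a] at hcn_a
  rw [dist_comm a p] at hcn_b
  rw [dist_comm]
  exact (pow_le_pow_iff_left₀ dist_nonneg (by positivity) two_ne_zero).1 (by nlinarith)

theorem dist_apply_half_pow_le (n : ℕ) (a b : Y) :
    dist (γ a ((1 / 2) ^ n)) (γ b ((1 / 2) ^ n)) ≤ (1 / 2) ^ n * dist a b := by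
  induction n generalizing a b with
  | zero => simp [hγ.apply_one]
  | succ n ih =>
    have h : (1 / 2 : ℝ) ∈ Icc (0 : ℝ) 1 := by norm_num
    have hn : (1 / 2 : ℝ) ^ n ∈ Icc (0 : ℝ) 1 :=
      ⟨by positivity, pow_le_one₀ (by norm_num) (by norm_num)⟩
    rw [pow_succ, hγ.apply_mul a hn h, hγ.apply_mul b hn h]
    calc _ ≤ (1 / 2) ^ n * dist (γ a (1 / 2)) (γ b (1 / 2)) := ih _ _
      _ ≤ (1 / 2) ^ n * (dist a b / 2) := by gcongr; exact hγ.dist_apply_half_le a b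
      _ = (1 / 2) ^ n * (1 / 2) * dist a b := by ring

end IsRadialGeodesics

section TangentCone

variable {Y TC : Type*} [MetricSpace Y] [MetricSpace TC]

def HasConeDistLimits (γ : Y → ℝ → Y) (π : Y → TC) (sm : ℝ → TC → TC) : Prop :=
  ∀ s s' : ℝ, 0 ≤ s → 0 ≤ s' → ∀ q q' : Y,
    Tendsto (fun e : ℝ => dist (γ q (e * s)) (γ q' (e * s')) / e) (𝓝[>] (0 : ℝ))
      (𝓝 (dist (sm s (π q)) (sm s' (π q'))))

namespace HasConeDistLimits

variable {γ : Y → ℝ → Y} {π : Y → TC} {sm : ℝ → TC → TC}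
  (hcone : HasConeDistLimits γ π sm)
include hcone

theorem eventually_dist_lt {s r : ℝ} (hs : 0 ≤ s) {q q' : Y}
    (hr : dist (sm s (π q)) (sm s (π q')) < r) :
    ∀ᶠ e in 𝓝[>] (0 : ℝ), dist (γ q (e * s)) (γ q' (e * s)) < r * e := by
  filter_upwards [(hcone s s hs hs q q').eventually_lt_const hr, self_mem_nhdsWithin]
    with e he he0
  exact (div_lt_iff₀ he0).1 he

variable [HadamardSpace Y] {p : Y} (hγ : IsRadialGeodesics p γ)
include hγ

theorem dist_sm_le_of_dist_apply_le {c q : Y} {e s r : ℝ} (he : 0 < e) (hs : 0 ≤ s)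
    (hes : e * s ≤ 1) (hc : dist c (γ q (e * s)) ≤ r * e) :
    dist (sm e⁻¹ (π c)) (sm s (π q)) ≤ r := by
  -- along `e * 2⁻ⁿ` the rescaling is realised by halving geodesics from `p` `n` times, and
  -- each halving at least halves distances
  have hseq : Tendsto (fun n : ℕ => e * (1 / 2) ^ n) atTop (𝓝[>] 0) := by
    refine tendsto_nhdsWithin_of_tendsto_nhds_of_eventually_within _ ?_
      (Eventually.of_forall fun n => mem_Ioi.2 (by positivity))
    simpa using (tendsto_pow_atTop_nhds_zero_of_lt_one (by norm_num)
      (by norm_num : (1 / 2 : ℝ) < 1)).const_mul e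
  refine le_of_tendsto ((hcone _ _ (inv_nonneg.2 he.le) hs c q).comp hseq)
    (Eventually.of_forall fun n => ?_)
  have hn : (1 / 2 : ℝ) ^ n ∈ Icc (0 : ℝ) 1 :=
    ⟨by positivity, pow_le_one₀ (by norm_num) (by norm_num)⟩
  have hc_scale : e * (1 / 2) ^ n * e⁻¹ = (1 / 2) ^ n := by field_simp
  have hq_scale : γ q (e * (1 / 2) ^ n * s) = γ (γ q (e * s)) ((1 / 2) ^ n) := by
    rw [← hγ.apply_mul q hn ⟨mul_nonneg he.le hs, hes⟩]
    ring_nf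
  simp only [Function.comp_apply, hc_scale, hq_scale]
  rw [div_le_iff₀ (by positivity)]
  calc _ ≤ (1 / 2) ^ n * dist c (γ q (e * s)) := hγ.dist_apply_half_pow_le n _ _
    _ ≤ (1 / 2) ^ n * (r * e) := by gcongr
    _ = r * (e * (1 / 2) ^ n) := by ring

theorem exists_fixed_cone_point_dist_le {G : Type*} [Group G] [Finite G] [MulAction G Y]
    (hG : ∀ g : G, Isometry (fun y : Y => g • y)) (hp : ∀ g : G, g • p = p) {s r : ℝ}
    (hs : 0 ≤ s) {q : Y} (hr : ∀ g : G, dist (sm s (π (g • q))) (sm s (π q)) < r) :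
    ∃ t ≥ 0, ∃ c : Y, (∀ g : G, g • c = c) ∧
      dist (sm t (π c)) (sm s (π q)) ≤ r := by
  have hscale : ∀ᶠ e in 𝓝[>] (0 : ℝ), e * s < 1 :=
    (((continuous_mul_const s).tendsto' 0 0 (zero_mul s)).eventually_lt_const
      one_pos).filter_mono nhdsWithin_le_nhds
  obtain ⟨e, he, hes, horbit⟩ := (eventually_mem_nhdsWithin.and <| hscale.and <|
    eventually_all.2 fun g => hcone.eventually_dist_lt hs (hr g)).exists
  obtain ⟨c, hc, hcy⟩ :=
    HadamardSpace.exists_fixed_point_dist_le hG (γ q (e * s)) (r := r * e) fun g => by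
      rw [hγ.map_apply (hG g) (hp g) q ⟨mul_nonneg (le_of_lt he) hs, hes.le⟩, dist_comm]
      exact (horbit g).le
  exact ⟨e⁻¹, inv_nonneg.2 (le_of_lt he), c, hc,
    hcone.dist_sm_le_of_dist_apply_le hγ he hs hes.le hcy⟩

end HasConeDistLimits

end TangentCone

theorem stmt3_general {Y : Type*} [MetricSpace Y] [HadamardSpace Y]
    {G : Type*} [Group G] [Finite G] [MulAction G Y]
    (hGY : ∀ g : G, Isometry (fun y : Y => g • y))
    (p : Y) (hp : ∀ g : G, g • p = p)
    {TC : Type*} [MetricSpace TC]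
    (π : Y → TC) (sm : ℝ → TC → TC)
    (γ : Y → ℝ → Y)
    (hγ0 : ∀ q : Y, γ q 0 = p) (hγ1 : ∀ q : Y, γ q 1 = q)
    (hγgeo : ∀ q : Y, ∀ τ ∈ Set.Icc (0:ℝ) 1, ∀ τ' ∈ Set.Icc (0:ℝ) 1,
      dist (γ q τ) (γ q τ') = |τ - τ'| * dist p q)
    (hcone : ∀ s s' : ℝ, 0 ≤ s → 0 ≤ s' → ∀ q q' : Y,
      Tendsto (fun e : ℝ => dist (γ q (e * s)) (γ q' (e * s')) / e) (𝓝[>] (0 : ℝ))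
        (𝓝 (dist (sm s (π q)) (sm s' (π q')))))
    (hdense : Dense {x : TC | ∃ s : ℝ, 0 ≤ s ∧ ∃ q : Y, x = sm s (π q)})
    (act : G → TC → TC) (hact : ∀ g : G, Isometry (act g))
    (hequiv : ∀ (g : G) (q : Y), act g (π q) = π (g • q))
    (hactsm : ∀ (g : G) (s : ℝ) (x : TC), act g (sm s x) = sm s (act g x)) :
    {x : TC | ∀ g : G, act g x = x}
      = closure {x : TC | ∃ s : ℝ, 0 ≤ s ∧ ∃ q : Y, (∀ g : G, g • q = q) ∧ x = sm s (π q)} := by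
  have hfix_closed : IsClosed {x : TC | ∀ g : G, act g x = x} := by
    simpa only [ofPred_forall] using
      isClosed_iInter fun g => isClosed_eq (hact g).continuous continuous_id'
  refine Subset.antisymm (fun x hx => Metric.mem_closure_iff.2 fun ε hε => ?_) ?_
  · obtain ⟨_, ⟨s, hs, q, rfl⟩, hxv⟩ :=
      hdense.exists_dist_lt x (by positivity : 0 < ε / 4)
    have horbit (g : G) : dist (sm s (π (g • q))) (sm s (π q)) < ε / 2 := by
      rw [← hequiv, ← hactsm]
      calc _ ≤ dist (act g (sm s (π q))) (act g x) + dist x (sm s (π q)) := by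
            rw [hx g]; exact dist_triangle _ _ _
        _ < ε / 2 := by rw [(hact g).dist_eq, dist_comm]; linarith
    obtain ⟨t, ht, c, hc, hcv⟩ := HasConeDistLimits.exists_fixed_cone_point_dist_le hcone
      ⟨hγ0, hγ1, hγgeo⟩ hGY hp hs horbit
    refine ⟨_, ⟨t, ht, c, hc, rfl⟩, ?_⟩
    linarith [dist_triangle_right x (sm t (π c)) (sm s (π q))]
  · refine closure_minimal ?_ hfix_closed
    rintro _ ⟨s, -, q, hq, rfl⟩ g
    rw [hactsm, hequiv, hq]

/-- Fixed points of a finite isometry group in the tangent cone.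
The tangent cone `TC = TC_pY` at `p` is axiomatized as a complete metric space with
origin `o`, projection `π : Y → TC`, a scaling `sm : ℝ → TC → TC`, such that the set of
scaled projected vectors is dense, and such that distances in the cone are the scaling
limits of distances in `Y` along the (fraction-parametrized) geodesics `γ q` from `p`
to `q`. A finite group `G` acting isometrically on `Y` fixing `p` induces (compatible
data `act`) an isometric action on `TC`. Conclusion: the fixed-point set of `G` in the
tangent cone is the closure of `ℝ₊ · π(Y^G)`. -/
theorem stmt3 {Y : Type*} [MetricSpace Y] [HadamardSpace Y]
    {G : Type*} [Group G] [Finite G] [MulAction G Y]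
    (hGY : ∀ g : G, Isometry (fun y : Y => g • y))
    (p : Y) (hp : ∀ g : G, g • p = p)
    {TC : Type*} [MetricSpace TC] [CompleteSpace TC]
    (o : TC) (π : Y → TC) (sm : ℝ → TC → TC)
    (γ : Y → ℝ → Y)
    (hγ0 : ∀ q : Y, γ q 0 = p) (hγ1 : ∀ q : Y, γ q 1 = q)
    (hγgeo : ∀ q : Y, ∀ τ ∈ Set.Icc (0:ℝ) 1, ∀ τ' ∈ Set.Icc (0:ℝ) 1,
      dist (γ q τ) (γ q τ') = |τ - τ'| * dist p q)
    (hπp : π p = o)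
    (hπd : ∀ q : Y, dist o (π q) = dist p q)
    (hsm0 : ∀ x : TC, sm 0 x = o) (hsmo : ∀ s : ℝ, sm s o = o)
    (hsm1 : ∀ x : TC, sm 1 x = x)
    (hcone : ∀ s s' : ℝ, 0 ≤ s → 0 ≤ s' → ∀ q q' : Y,
      Tendsto (fun e : ℝ => dist (γ q (e * s)) (γ q' (e * s')) / e) (𝓝[>] (0 : ℝ))
        (𝓝 (dist (sm s (π q)) (sm s' (π q')))))
    (hdense : Dense {x : TC | ∃ s : ℝ, 0 ≤ s ∧ ∃ q : Y, x = sm s (π q)})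
    (act : G → TC → TC) (hact : ∀ g : G, Isometry (act g))
    (hacto : ∀ g : G, act g o = o)
    (hequiv : ∀ (g : G) (q : Y), act g (π q) = π (g • q))
    (hactsm : ∀ (g : G) (s : ℝ) (x : TC), act g (sm s x) = sm s (act g x)) :
    {x : TC | ∀ g : G, act g x = x}
      = closure {x : TC | ∃ s : ℝ, 0 ≤ s ∧ ∃ q : Y, (∀ g : G, g • q = q) ∧ x = sm s (π q)} :=
  stmt3_general hGY p hp π sm γ hγ0 hγ1 hγgeo hcone hdense act hact hequiv hactsm
end

section
/- Let T be a Hadamard space and v ∈ T. Then δ(T, v) ≤ δ(TC_vT, 0_v), where 0_v is the origin of the tangent cone TC_vT. -/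
open Filter Metric Set Topology

/-- `b` is the barycenter of the points `v` with weights `t`: it minimizes the
weighted sum of squared distances. -/
def IsWBarycenter {T : Type*} [MetricSpace T] {ι : Type*} [Fintype ι]
    (b : T) (v : ι → T) (t : ι → ℝ) : Prop :=
  ∀ q : T, ∑ i, t i * dist (v i) b ^ 2 ≤ ∑ i, t i * dist (v i) q ^ 2

/-- A Euclidean realization of the configuration `v` with barycenter `b`. -/
def IsRealization {T : Type*} [MetricSpace T] {ι : Type*} {N : ℕ}
    (b : T) (v : ι → T) (w : ι → EuclideanSpace ℝ (Fin N)) : Prop :=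
  (∀ i, ‖w i‖ = dist b (v i)) ∧ ∀ i j, ‖w i - w j‖ ≤ dist (v i) (v j)

/-- The invariant `δ({v_i},{t_i})` of a weighted configuration with barycenter `b`. -/
noncomputable def deltaConfig {T : Type*} [MetricSpace T] {m : ℕ}
    (b : T) (v : Fin m → T) (t : Fin m → ℝ) : ℝ :=
  sInf {r : ℝ | ∃ (N : ℕ) (w : Fin m → EuclideanSpace ℝ (Fin N)),
    IsRealization b v w ∧ r = ‖∑ i, t i • w i‖ ^ 2 / ∑ i, t i * ‖w i‖ ^ 2}

/-- The invariant `δ(T, v)`: supremum of `δ` over configurations of distinct points with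
positive weights summing to `1` whose barycenter is `v`. -/
noncomputable def deltaAt (T : Type*) [MetricSpace T] (v : T) : ℝ :=
  sSup {r : ℝ | ∃ (m : ℕ) (vv : Fin m → T) (t : Fin m → ℝ),
    Function.Injective vv ∧ (∀ i, 0 < t i) ∧ (∑ i, t i = 1) ∧
    IsWBarycenter v vv t ∧ r = deltaConfig v vv t}

/-- The invariant `δ(T)`: supremum of `δ` over all weighted configurations. -/
noncomputable def deltaTotal (T : Type*) [MetricSpace T] : ℝ :=
  sSup {r : ℝ | ∃ (m : ℕ) (vv : Fin m → T) (t : Fin m → ℝ) (b : T),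
    Function.Injective vv ∧ (∀ i, 0 < t i) ∧ (∑ i, t i = 1) ∧
    IsWBarycenter b vv t ∧ r = deltaConfig b vv t}


lemma midpt_comp {Y : Type*} [MetricSpace Y] [HadamardSpace Y] (p a b ma mb : Y)
    (ha1 : dist p ma = dist p a / 2) (ha2 : dist ma a = dist p a / 2)
    (hb1 : dist p mb = dist p b / 2) (hb2 : dist mb b = dist p b / 2) :
    dist ma mb ≤ dist a b / 2 := by
  have h1 := HadamardSpace.cn ma p b mb hb1 hb2
  have h2 := HadamardSpace.cn b p a ma ha1 ha2
  have e1 : dist b ma = dist ma b := dist_comm _ _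
  have e2 : dist b p = dist p b := dist_comm _ _
  have e3 : dist b a = dist a b := dist_comm _ _
  have e4 : dist ma p = dist p a / 2 := by rw [dist_comm ma p, ha1]
  rw [e1, e2, e3] at h2
  rw [e4] at h1
  nlinarith [dist_nonneg (x := ma) (y := mb), dist_nonneg (x := a) (y := b),
    dist_nonneg (x := ma) (y := b)]

lemma pi_lip {T : Type*} [MetricSpace T] [HadamardSpace T] (v : T)
    {TC : Type*} [MetricSpace TC]
    (o : TC) (π : T → TC) (sm : ℝ → TC → TC) (γ : T → ℝ → T)
    (hγ0 : ∀ q : T, γ q 0 = v) (hγ1 : ∀ q : T, γ q 1 = q)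
    (hγgeo : ∀ q : T, ∀ τ ∈ Set.Icc (0:ℝ) 1, ∀ τ' ∈ Set.Icc (0:ℝ) 1,
      dist (γ q τ) (γ q τ') = |τ - τ'| * dist v q)
    (hsm1 : ∀ x : TC, sm 1 x = x)
    (hcone : ∀ s s' : ℝ, 0 ≤ s → 0 ≤ s' → ∀ q q' : T,
      Tendsto (fun e : ℝ => dist (γ q (e * s)) (γ q' (e * s')) / e) (𝓝[>] (0 : ℝ))
        (𝓝 (dist (sm s (π q)) (sm s' (π q')))))
    (q q' : T) : dist (π q) (π q') ≤ dist q q' := by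
  have hv : ∀ p : T, ∀ τ ∈ Set.Icc (0:ℝ) 1, dist v (γ p τ) = τ * dist v p := by
    intro p τ hτ
    have h0 : (0:ℝ) ∈ Set.Icc (0:ℝ) 1 := ⟨le_refl _, zero_le_one⟩
    have := hγgeo p 0 h0 τ hτ
    rw [hγ0 p] at this
    rw [this, abs_of_nonpos (by linarith [hτ.1])]
    ring_nf
  have key : ∀ n : ℕ, dist (γ q ((2:ℝ)⁻¹^n)) (γ q' ((2:ℝ)⁻¹^n)) ≤ (2:ℝ)⁻¹^n * dist q q' := by
    intro n
    induction n with
    | zero => simp [hγ1]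
    | succ n ih =>
      set e : ℝ := (2:ℝ)⁻¹^n with hedef
      have he : 0 < e := by positivity
      have he1 : e ≤ 1 := by
        apply pow_le_one₀ <;> norm_num
      have hmem : e ∈ Set.Icc (0:ℝ) 1 := ⟨le_of_lt he, he1⟩
      have hmem2 : e/2 ∈ Set.Icc (0:ℝ) 1 := ⟨by positivity, by linarith⟩
      have hstep : ∀ p : T, dist v (γ p (e/2)) = dist v (γ p e) / 2 ∧
          dist (γ p (e/2)) (γ p e) = dist v (γ p e) / 2 := by
        intro p
        have h1 := hv p (e/2) hmem2
        have h2 := hv p e hmem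
        have h3 := hγgeo p (e/2) hmem2 e hmem
        constructor
        · rw [h1, h2]; ring
        · rw [h3, h2, abs_of_nonpos (by linarith)]; ring
      have hm := midpt_comp v (γ q e) (γ q' e) (γ q (e/2)) (γ q' (e/2))
        (hstep q).1 (hstep q).2 (hstep q').1 (hstep q').2
      have : (2:ℝ)⁻¹^(n+1) = e/2 := by rw [pow_succ]; ring
      rw [this]
      calc dist (γ q (e/2)) (γ q' (e/2)) ≤ dist (γ q e) (γ q' e) / 2 := hm
        _ ≤ e * dist q q' / 2 := by linarith
        _ = e/2 * dist q q' := by ring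
  have hT := hcone 1 1 zero_le_one zero_le_one q q'
  simp only [mul_one, hsm1] at hT
  have hseq : Tendsto (fun n : ℕ => ((2:ℝ)⁻¹)^n) atTop (𝓝[>] (0:ℝ)) := by
    apply tendsto_nhdsWithin_of_tendsto_nhds_of_eventually_within
    · exact tendsto_pow_atTop_nhds_zero_of_lt_one (by norm_num) (by norm_num)
    · exact Filter.Eventually.of_forall fun n => Set.mem_Ioi.mpr (by positivity)
  refine le_of_tendsto (hT.comp hseq) (Filter.Eventually.of_forall fun n => ?_)
  have hp : (0:ℝ) < (2:ℝ)⁻¹^n := by positivity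
  show dist (γ q ((2:ℝ)⁻¹^n)) (γ q' ((2:ℝ)⁻¹^n)) / (2:ℝ)⁻¹^n ≤ dist q q'
  rw [div_le_iff₀ hp, mul_comm]
  exact key n


lemma bary_push {T : Type*} [MetricSpace T] (v : T)
    {TC : Type*} [MetricSpace TC]
    (o : TC) (π : T → TC) (sm : ℝ → TC → TC) (γ : T → ℝ → T)
    (hγ1 : ∀ q : T, γ q 1 = q)
    (hγgeo : ∀ q : T, ∀ τ ∈ Set.Icc (0:ℝ) 1, ∀ τ' ∈ Set.Icc (0:ℝ) 1,
      dist (γ q τ) (γ q τ') = |τ - τ'| * dist v q)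
    (hπd : ∀ q : T, dist o (π q) = dist v q)
    (hsm1 : ∀ x : TC, sm 1 x = x)
    (hcone : ∀ s s' : ℝ, 0 ≤ s → 0 ≤ s' → ∀ q q' : T,
      Tendsto (fun e : ℝ => dist (γ q (e * s)) (γ q' (e * s')) / e) (𝓝[>] (0 : ℝ))
        (𝓝 (dist (sm s (π q)) (sm s' (π q')))))
    (hdense : Dense {x : TC | ∃ s : ℝ, 0 ≤ s ∧ ∃ q : T, x = sm s (π q)})
    {m : ℕ} (vv : Fin m → T) (t : Fin m → ℝ) (ht : ∀ i, 0 ≤ t i)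
    (hbar : IsWBarycenter v vv t) :
    IsWBarycenter o (fun i => π (vv i)) t := by
  intro x
  have hf : Continuous fun x : TC => ∑ i, t i * dist (π (vv i)) x ^ 2 := by
    apply continuous_finset_sum
    intro i _
    exact continuous_const.mul ((continuous_const.dist continuous_id).pow 2)
  have hcl : IsClosed {x : TC |
      ∑ i, t i * dist (π (vv i)) o ^ 2 ≤ ∑ i, t i * dist (π (vv i)) x ^ 2} :=
    isClosed_le continuous_const hf
  suffices hsub : {x : TC | ∃ s : ℝ, 0 ≤ s ∧ ∃ q : T, x = sm s (π q)} ⊆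
      {x : TC | ∑ i, t i * dist (π (vv i)) o ^ 2 ≤ ∑ i, t i * dist (π (vv i)) x ^ 2} by
    have h2 := hcl.closure_subset_iff.mpr hsub
    exact h2 (by rw [hdense.closure_eq]; trivial)
  rintro x ⟨s, hs, q, rfl⟩
  set d : Fin m → ℝ := fun i => dist v (vv i) with hd
  set D : ℝ → Fin m → ℝ := fun e i => dist (γ (vv i) e) (γ q (e*s)) with hD
  set L : Fin m → ℝ := fun i => dist (π (vv i)) (sm s (π q)) with hL
  have hLi : ∀ i, Tendsto (fun e => D e i / e) (𝓝[>] (0:ℝ)) (𝓝 (L i)) := by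
    intro i
    have := hcone 1 s zero_le_one hs (vv i) q
    simpa only [mul_one, hsm1] using this
  set F : ℝ → ℝ := fun e => ∑ i, t i *
    ((e-2) * d i^2 + 2*(1-e)*(d i)*(D e i / e) + e * (D e i / e)^2) with hF
  have he0 : Tendsto (fun e : ℝ => e) (𝓝[>] (0:ℝ)) (𝓝 0) :=
    tendsto_id.mono_right nhdsWithin_le_nhds
  have hFlim : Tendsto F (𝓝[>] (0:ℝ))
      (𝓝 (∑ i, t i * ((0-2) * d i^2 + 2*(1-0)*(d i)*(L i) + 0 * (L i)^2))) := by
    apply tendsto_finset_sum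
    intro i _
    apply Tendsto.const_mul
    exact (((he0.sub_const 2).mul_const _).add
      ((((he0.const_sub 1).const_mul 2).mul_const (d i)).mul (hLi i))).add
      (he0.mul ((hLi i).pow 2))
  have hev : ∀ᶠ e in 𝓝[>] (0:ℝ), 0 ≤ F e := by
    filter_upwards [Ioo_mem_nhdsGT_of_mem (Set.mem_Ico.mpr ⟨le_refl (0:ℝ), one_pos⟩)]
    intro e he
    obtain ⟨he1, he2⟩ := he
    have hbq := hbar (γ q (e*s))
    have hbound : ∀ i, dist (vv i) (γ q (e*s)) ≤ (1-e)*d i + D e i := by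
      intro i
      have h1 : dist (vv i) (γ (vv i) e) = (1-e) * d i := by
        have := hγgeo (vv i) 1 ⟨zero_le_one, le_refl _⟩ e ⟨he1.le, he2.le⟩
        rw [hγ1] at this
        rw [this, abs_of_nonneg (by linarith)]
      calc dist (vv i) (γ q (e*s)) ≤ dist (vv i) (γ (vv i) e) + D e i := dist_triangle _ _ _
        _ = (1-e)*d i + D e i := by rw [h1]
    have hsum : ∑ i, t i * d i ^ 2 ≤ ∑ i, t i * ((1-e)*d i + D e i)^2 := by
      calc ∑ i, t i * d i ^ 2 = ∑ i, t i * dist (vv i) v ^ 2 := by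
            apply Finset.sum_congr rfl; intro i _; rw [dist_comm]
        _ ≤ ∑ i, t i * dist (vv i) (γ q (e*s)) ^ 2 := hbq
        _ ≤ ∑ i, t i * ((1-e)*d i + D e i)^2 := by
            apply Finset.sum_le_sum
            intro i _
            apply mul_le_mul_of_nonneg_left _ (ht i)
            apply pow_le_pow_left₀ dist_nonneg (hbound i)
    have hFe : F e = (∑ i, t i * ((1-e)*d i + D e i)^2 - ∑ i, t i * d i ^2)/e := by
      rw [hF, ← Finset.sum_sub_distrib, Finset.sum_div]
      apply Finset.sum_congr rfl
      intro i _
      field_simp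
      ring
    rw [hFe]
    exact div_nonneg (by linarith) he1.le
  have hge := ge_of_tendsto hFlim hev
  have hkey : ∑ i, t i * d i ^ 2 ≤ ∑ i, t i * (d i * L i) := by
    have heq : ∑ i, t i * ((0-2) * d i^2 + 2*(1-0)*(d i)*(L i) + 0 * (L i)^2)
        = ∑ i, (2*(t i * (d i * L i)) - 2*(t i * d i ^2)) := by
      apply Finset.sum_congr rfl; intro i _; ring
    rw [heq, Finset.sum_sub_distrib, ← Finset.mul_sum, ← Finset.mul_sum] at hge
    linarith
  have h2 : ∑ i, t i * (d i * L i) ≤ (∑ i, t i * d i ^2 + ∑ i, t i * L i ^2)/2 := by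
    have := Finset.sum_le_sum (s := Finset.univ)
      (f := fun i => t i * (d i * L i))
      (g := fun i => (t i * d i ^2 + t i * L i ^2)/2)
      (fun i _ => by nlinarith [sq_nonneg (d i - L i), ht i])
    calc ∑ i, t i * (d i * L i) ≤ ∑ i, (t i * d i ^2 + t i * L i ^2)/2 := this
      _ = (∑ i, t i * d i ^2 + ∑ i, t i * L i ^2)/2 := by
          rw [← Finset.sum_div, Finset.sum_add_distrib]
  have hfin : ∑ i, t i * d i ^ 2 ≤ ∑ i, t i * L i ^ 2 := by linarith
  calc ∑ i, t i * dist (π (vv i)) o ^ 2 = ∑ i, t i * d i ^ 2 := by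
        apply Finset.sum_congr rfl; intro i _
        rw [dist_comm, hπd]
    _ ≤ ∑ i, t i * L i ^ 2 := hfin
    _ = ∑ i, t i * dist (π (vv i)) (sm s (π q)) ^ 2 := rfl


lemma single_sub' {N : ℕ} (i : Fin N) (a b : ℝ) :
    EuclideanSpace.single i a - EuclideanSpace.single i b = EuclideanSpace.single i (a - b) := by
  ext j
  simp [EuclideanSpace.single_apply]
  split_ifs <;> ring

lemma single_sum' {m : ℕ} (t c : Fin m → ℝ) :
    ∑ i, t i • EuclideanSpace.single (0 : Fin 1) (c i)
      = EuclideanSpace.single (0 : Fin 1) (∑ i, t i * c i) := by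
  ext j
  have hj : j = 0 := Subsingleton.elim _ _
  subst hj
  show EuclideanSpace.projₗ (𝕜 := ℝ) (0 : Fin 1)
      (∑ x, t x • EuclideanSpace.single (0:Fin 1) (c x)) = _
  rw [map_sum]
  simp [EuclideanSpace.projₗ, PiLp.projₗ, EuclideanSpace.single_apply]

lemma line_real {T : Type*} [MetricSpace T] {m : ℕ} (b : T) (vv : Fin m → T) :
    IsRealization b vv (fun i => EuclideanSpace.single (0 : Fin 1) (dist b (vv i))) := by
  constructor
  · intro i
    rw [EuclideanSpace.norm_single, Real.norm_eq_abs, abs_of_nonneg dist_nonneg]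
  · intro i j
    rw [single_sub', EuclideanSpace.norm_single, Real.norm_eq_abs]
    rw [dist_comm b (vv i), dist_comm b (vv j)]
    exact abs_dist_sub_le (vv i) (vv j) b

lemma real_set_nonempty {T : Type*} [MetricSpace T] {m : ℕ} (b : T) (vv : Fin m → T)
    (t : Fin m → ℝ) :
    {r : ℝ | ∃ (N : ℕ) (w : Fin m → EuclideanSpace ℝ (Fin N)),
      IsRealization b vv w ∧ r = ‖∑ i, t i • w i‖ ^ 2 / ∑ i, t i * ‖w i‖ ^ 2}.Nonempty :=
  ⟨_, 1, _, line_real b vv, rfl⟩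

lemma real_set_bddBelow {T : Type*} [MetricSpace T] {m : ℕ} (b : T) (vv : Fin m → T)
    (t : Fin m → ℝ) (ht : ∀ i, 0 ≤ t i) :
    (0:ℝ) ∈ lowerBounds {r : ℝ | ∃ (N : ℕ) (w : Fin m → EuclideanSpace ℝ (Fin N)),
      IsRealization b vv w ∧ r = ‖∑ i, t i • w i‖ ^ 2 / ∑ i, t i * ‖w i‖ ^ 2} := by
  rintro r ⟨N, w, hw, rfl⟩
  apply div_nonneg (sq_nonneg _)
  exact Finset.sum_nonneg fun i _ => mul_nonneg (ht i) (sq_nonneg _)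

lemma deltaConfig_nonneg {T : Type*} [MetricSpace T] {m : ℕ} (b : T) (vv : Fin m → T)
    (t : Fin m → ℝ) (ht : ∀ i, 0 ≤ t i) : 0 ≤ deltaConfig b vv t :=
  Real.sInf_nonneg fun _ hr => real_set_bddBelow b vv t ht hr

lemma deltaConfig_le_one {T : Type*} [MetricSpace T] {m : ℕ} (b : T) (vv : Fin m → T)
    (t : Fin m → ℝ) (ht : ∀ i, 0 ≤ t i) (hsum : ∑ i, t i = 1) :
    deltaConfig b vv t ≤ 1 := by
  set d : Fin m → ℝ := fun i => dist b (vv i) with hd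
  have hmem : ‖∑ i, t i • EuclideanSpace.single (0 : Fin 1) (d i)‖ ^ 2 /
      ∑ i, t i * ‖EuclideanSpace.single (0 : Fin 1) (d i)‖ ^ 2 ∈
      {r : ℝ | ∃ (N : ℕ) (w : Fin m → EuclideanSpace ℝ (Fin N)),
        IsRealization b vv w ∧ r = ‖∑ i, t i • w i‖ ^ 2 / ∑ i, t i * ‖w i‖ ^ 2} :=
    ⟨1, _, line_real b vv, rfl⟩
  have hle := csInf_le ⟨0, real_set_bddBelow b vv t ht⟩ hmem
  refine le_trans hle ?_
  have hnum : ‖∑ i, t i • EuclideanSpace.single (0 : Fin 1) (d i)‖ ^ 2 = (∑ i, t i * d i)^2 := by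
    rw [single_sum', EuclideanSpace.norm_single, Real.norm_eq_abs, sq_abs]
  have hden : ∑ i, t i * ‖EuclideanSpace.single (0 : Fin 1) (d i)‖ ^ 2 = ∑ i, t i * d i ^ 2 := by
    apply Finset.sum_congr rfl
    intro i _
    rw [EuclideanSpace.norm_single, Real.norm_eq_abs, sq_abs]
  rw [hnum, hden]
  have hcs : (∑ i, t i * d i)^2 ≤ ∑ i, t i * d i ^ 2 := by
    have h := Finset.sum_mul_sq_le_sq_mul_sq Finset.univ
      (fun i => Real.sqrt (t i)) (fun i => Real.sqrt (t i) * d i)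
    have h1 : ∀ i : Fin m, Real.sqrt (t i) * (Real.sqrt (t i) * d i) = t i * d i := by
      intro i
      rw [← mul_assoc, Real.mul_self_sqrt (ht i)]
    have h2 : ∀ i : Fin m, Real.sqrt (t i) ^ 2 = t i := fun i => Real.sq_sqrt (ht i)
    have h3 : ∀ i : Fin m, (Real.sqrt (t i) * d i) ^ 2 = t i * d i ^ 2 := by
      intro i
      rw [mul_pow, h2]
    simp only [h1] at h
    calc (∑ i, t i * d i)^2 ≤ (∑ i, Real.sqrt (t i) ^2) * ∑ i, (Real.sqrt (t i) * d i)^2 := h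
      _ = (∑ i, t i) * ∑ i, t i * d i ^2 := by
          rw [Finset.sum_congr rfl fun i _ => h2 i, Finset.sum_congr rfl fun i _ => h3 i]
      _ = ∑ i, t i * d i ^2 := by rw [hsum, one_mul]
  rcases eq_or_lt_of_le (Finset.sum_nonneg (fun i (_ : i ∈ Finset.univ) =>
      mul_nonneg (ht i) (sq_nonneg (d i)))) with h0 | h0
  · rw [← h0, div_zero]; exact zero_le_one
  · rw [div_le_one h0]; exact hcs

lemma deltaConfig_pull {T : Type*} [MetricSpace T] {TC : Type*} [MetricSpace TC]
    {m k : ℕ} (b : T) (vv : Fin m → T) (t : Fin m → ℝ) (ht : ∀ i, 0 ≤ t i)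
    (b' : TC) (vv' : Fin k → TC) (t' : Fin k → ℝ)
    (c : Fin m → Fin k)
    (hd : ∀ i, dist b' (vv' (c i)) = dist b (vv i))
    (hlip : ∀ i j, dist (vv' (c i)) (vv' (c j)) ≤ dist (vv i) (vv j))
    (ht' : ∀ j, t' j = ∑ i ∈ Finset.univ.filter (fun i => c i = j), t i) :
    deltaConfig b vv t ≤ deltaConfig b' vv' t' := by
  apply csInf_le_csInf ⟨0, real_set_bddBelow b vv t ht⟩ (real_set_nonempty b' vv' t')
  rintro r ⟨N, w, ⟨hw1, hw2⟩, rfl⟩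
  refine ⟨N, fun i => w (c i), ⟨?_, ?_⟩, ?_⟩
  · intro i
    rw [hw1, hd]
  · intro i j
    exact le_trans (hw2 (c i) (c j)) (hlip i j)
  · have hnum : ∑ i, t i • w (c i) = ∑ j, t' j • w j := by
      rw [← Finset.sum_fiberwise Finset.univ c (fun i => t i • w (c i))]
      apply Finset.sum_congr rfl
      intro j _
      rw [ht' j, Finset.sum_smul]
      apply Finset.sum_congr rfl
      intro i hi
      rw [(Finset.mem_filter.mp hi).2]
    have hden : ∑ i, t i * ‖w (c i)‖ ^ 2 = ∑ j, t' j * ‖w j‖ ^ 2 := by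
      rw [← Finset.sum_fiberwise Finset.univ c (fun i => t i * ‖w (c i)‖ ^ 2)]
      apply Finset.sum_congr rfl
      intro j _
      rw [ht' j, Finset.sum_mul]
      apply Finset.sum_congr rfl
      intro i hi
      rw [(Finset.mem_filter.mp hi).2]
    rw [hnum, hden]


/-- `δ(T, v) ≤ δ(TC_vT, 0_v)`.  The tangent cone `TC` at `v` is axiomatized as a
complete metric space with origin `o`, projection `π`, scaling `sm`, dense scaled
image, and distances given by the scaling limits of distances in `T` along the
fraction-parametrized geodesics `γ q` from `v` to `q`. -/
theorem stmt6 {T : Type*} [MetricSpace T] [HadamardSpace T] (v : T)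
    {TC : Type*} [MetricSpace TC] [CompleteSpace TC]
    (o : TC) (π : T → TC) (sm : ℝ → TC → TC)
    (γ : T → ℝ → T)
    (hγ0 : ∀ q : T, γ q 0 = v) (hγ1 : ∀ q : T, γ q 1 = q)
    (hγgeo : ∀ q : T, ∀ τ ∈ Set.Icc (0:ℝ) 1, ∀ τ' ∈ Set.Icc (0:ℝ) 1,
      dist (γ q τ) (γ q τ') = |τ - τ'| * dist v q)
    (hπp : π v = o)
    (hπd : ∀ q : T, dist o (π q) = dist v q)
    (hsm0 : ∀ x : TC, sm 0 x = o) (hsmo : ∀ s : ℝ, sm s o = o)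
    (hsm1 : ∀ x : TC, sm 1 x = x)
    (hcone : ∀ s s' : ℝ, 0 ≤ s → 0 ≤ s' → ∀ q q' : T,
      Tendsto (fun e : ℝ => dist (γ q (e * s)) (γ q' (e * s')) / e) (𝓝[>] (0 : ℝ))
        (𝓝 (dist (sm s (π q)) (sm s' (π q')))))
    (hdense : Dense {x : TC | ∃ s : ℝ, 0 ≤ s ∧ ∃ q : T, x = sm s (π q)}) :
    deltaAt T v ≤ deltaAt TC o := by
  classical
  have hlip : ∀ q q' : T, dist (π q) (π q') ≤ dist q q' :=
    pi_lip v o π sm γ hγ0 hγ1 hγgeo hsm1 hcone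
  have hbdd : BddAbove {r : ℝ | ∃ (m : ℕ) (vv : Fin m → TC) (t : Fin m → ℝ),
      Function.Injective vv ∧ (∀ i, 0 < t i) ∧ (∑ i, t i = 1) ∧
      IsWBarycenter o vv t ∧ r = deltaConfig o vv t} := by
    refine ⟨1, ?_⟩
    rintro r ⟨m', vv', t', _, hp, hs1, _, rfl⟩
    exact deltaConfig_le_one o vv' t' (fun i => (hp i).le) hs1
  have h0le : (0:ℝ) ≤ deltaAt TC o := by
    have hmem : deltaConfig o (fun _ : Fin 1 => o) (fun _ => (1:ℝ)) ∈
        {r : ℝ | ∃ (m : ℕ) (vv : Fin m → TC) (t : Fin m → ℝ),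
        Function.Injective vv ∧ (∀ i, 0 < t i) ∧ (∑ i, t i = 1) ∧
        IsWBarycenter o vv t ∧ r = deltaConfig o vv t} := by
      refine ⟨1, _, _, fun a b _ => Subsingleton.elim a b, fun _ => one_pos, by simp, ?_, rfl⟩
      intro q
      have h : (0:ℝ) ≤ dist o q ^ 2 := sq_nonneg _
      simpa using h
    exact le_trans (deltaConfig_nonneg o _ _ (fun _ => zero_le_one)) (le_csSup hbdd hmem)
  apply Real.sSup_le _ h0le
  rintro r ⟨m, vv, t, hinj, htpos, htsum, hbar, rfl⟩
  -- push forward the configuration and merge coincident points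
  let u : Fin m → TC := fun i => π (vv i)
  let s : Finset TC := Finset.image u Finset.univ
  let E := s.equivFin
  let vv' : Fin s.card → TC := fun j => ((E.symm j : s) : TC)
  have hvv'inj : Function.Injective vv' := fun a b hab =>
    E.symm.injective (Subtype.ext hab)
  have humem : ∀ i, u i ∈ s := fun i => Finset.mem_image_of_mem u (Finset.mem_univ i)
  let c : Fin m → Fin s.card := fun i => E ⟨u i, humem i⟩
  have hvc : ∀ i, vv' (c i) = u i := by
    intro i
    show ((E.symm (E ⟨u i, humem i⟩) : s) : TC) = u i
    rw [Equiv.symm_apply_apply]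
  let t' : Fin s.card → ℝ := fun j => ∑ i ∈ Finset.univ.filter (fun i => c i = j), t i
  have hcsurj : ∀ j, ∃ i, c i = j := by
    intro j
    have hx : ((E.symm j : s) : TC) ∈ s := (E.symm j).2
    obtain ⟨i, _, hi⟩ := Finset.mem_image.mp hx
    refine ⟨i, ?_⟩
    have heq : (⟨u i, humem i⟩ : s) = E.symm j := Subtype.ext hi
    show E ⟨u i, humem i⟩ = j
    rw [heq, Equiv.apply_symm_apply]
  have ht'pos : ∀ j, 0 < t' j := by
    intro j
    obtain ⟨i0, hi0⟩ := hcsurj j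
    exact Finset.sum_pos (fun i _ => htpos i)
      ⟨i0, Finset.mem_filter.mpr ⟨Finset.mem_univ _, hi0⟩⟩
  have ht'sum : ∑ j, t' j = 1 := by
    rw [show ∑ j, t' j = ∑ j, ∑ i ∈ Finset.univ.filter (fun i => c i = j), t i from rfl]
    rw [Finset.sum_fiberwise Finset.univ c t]
    exact htsum
  have hkey : ∀ x : TC, ∑ j, t' j * dist (vv' j) x ^ 2 = ∑ i, t i * dist (u i) x ^ 2 := by
    intro x
    rw [← Finset.sum_fiberwise Finset.univ c (fun i => t i * dist (u i) x ^ 2)]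
    apply Finset.sum_congr rfl
    intro j _
    show (∑ i ∈ Finset.univ.filter (fun i => c i = j), t i) * dist (vv' j) x ^ 2 = _
    rw [Finset.sum_mul]
    apply Finset.sum_congr rfl
    intro i hi
    rw [← hvc i, (Finset.mem_filter.mp hi).2]
  have hbaru : IsWBarycenter o u t :=
    bary_push v o π sm γ hγ1 hγgeo hπd hsm1 hcone hdense vv t (fun i => (htpos i).le) hbar
  have hbar' : IsWBarycenter o vv' t' := by
    intro x
    rw [hkey x, hkey o]
    exact hbaru x
  have hdc : deltaConfig v vv t ≤ deltaConfig o vv' t' := by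
    apply deltaConfig_pull v vv t (fun i => (htpos i).le) o vv' t' c
    · intro i
      rw [hvc i]
      exact hπd (vv i)
    · intro i j
      rw [hvc i, hvc j]
      exact hlip (vv i) (vv j)
    · intro j
      rfl
  have hmem : deltaConfig o vv' t' ∈ {r : ℝ | ∃ (m : ℕ) (vv : Fin m → TC) (t : Fin m → ℝ),
      Function.Injective vv ∧ (∀ i, 0 < t i) ∧ (∑ i, t i = 1) ∧
      IsWBarycenter o vv t ∧ r = deltaConfig o vv t} :=
    ⟨s.card, vv', t', hvv'inj, ht'pos, ht'sum, hbar', rfl⟩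
  exact le_trans hdc (le_csSup hbdd hmem)
end

section
/- Let T_1, T_2 be Hadamard spaces. Then δ(T_1 × T_2) ≤ max{δ(T_1), δ(T_2)}, where T_1 × T_2 carries the l²-product metric. In particular, if δ(T_1) = δ(T_2) = 0, then δ(T_1 × T_2) = 0. -/
open Filter Metric Set Topology

/-!
In the `ℓ²`-product the barycenter projects to the barycenters of the factors, and Euclidean
realizations `w₁`, `w₂` of the two projected configurations combine into the realization
`i ↦ (w₁ i, w₂ i)` of the product configuration. Its ratio is the mediant
`(A₁ + A₂) / (D₁ + D₂)` of the two ratios `Aₖ / Dₖ`, hence at most their maximum.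
The projections of a configuration of distinct points may repeat points; merging repeated points
and adding their weights keeps every realization, so `δ(T)` bounds `δ` of every configuration.
-/

open Finset

section Realizations

variable {T : Type*} [MetricSpace T] {m : ℕ}

lemma norm_sum_smul_sq_le_sum_mul_norm_sq {ι E : Type*} [Fintype ι] [SeminormedAddCommGroup E]
    [NormedSpace ℝ E] {t : ι → ℝ} (ht : ∀ i, 0 ≤ t i) (hs : ∑ i, t i = 1) (w : ι → E) :
    ‖∑ i, t i • w i‖ ^ 2 ≤ ∑ i, t i * ‖w i‖ ^ 2 := by
  have hnorm : ‖∑ i, t i • w i‖ ≤ ∑ i, t i • ‖w i‖ :=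
    (norm_sum_le _ _).trans_eq <| sum_congr rfl fun i _ => by
      rw [norm_smul, Real.norm_of_nonneg (ht i), smul_eq_mul]
  calc ‖∑ i, t i • w i‖ ^ 2 ≤ (∑ i, t i • ‖w i‖) ^ 2 := pow_le_pow_left₀ (norm_nonneg _) hnorm 2
    _ ≤ ∑ i, t i • ‖w i‖ ^ 2 :=
      (convexOn_pow 2).map_sum_le (fun i _ => ht i) hs fun i _ => norm_nonneg (w i)

def realizationRatios (b : T) (v : Fin m → T) (t : Fin m → ℝ) : Set ℝ :=
  {r : ℝ | ∃ (N : ℕ) (w : Fin m → EuclideanSpace ℝ (Fin N)),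
    IsRealization b v w ∧ r = ‖∑ i, t i • w i‖ ^ 2 / ∑ i, t i * ‖w i‖ ^ 2}

lemma ratio_mem_realizationRatios {E : Type*} [NormedAddCommGroup E] [InnerProductSpace ℝ E]
    [FiniteDimensional ℝ E] {b : T} {v : Fin m → T} (t : Fin m → ℝ) {w : Fin m → E}
    (hnorm : ∀ i, ‖w i‖ = dist b (v i)) (hdist : ∀ i j, ‖w i - w j‖ ≤ dist (v i) (v j)) :
    ‖∑ i, t i • w i‖ ^ 2 / ∑ i, t i * ‖w i‖ ^ 2 ∈ realizationRatios b v t := by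
  let L := (stdOrthonormalBasis ℝ E).repr
  refine ⟨_, fun i => L (w i), ⟨fun i => ?_, fun i j => ?_⟩, ?_⟩
  · rw [L.norm_map, hnorm]
  · rw [← map_sub, L.norm_map]
    exact hdist i j
  · simp only [← map_smul, ← map_sum, L.norm_map]

variable {b : T} {v : Fin m → T} {t : Fin m → ℝ}

lemma realizationRatios_subset_Icc (ht : ∀ i, 0 ≤ t i) (hs : ∑ i, t i = 1) :
    realizationRatios b v t ⊆ Set.Icc 0 1 := by
  rintro _ ⟨N, w, -, rfl⟩
  have hden : 0 ≤ ∑ i, t i * ‖w i‖ ^ 2 := sum_nonneg fun i _ => by have := ht i; positivity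
  exact ⟨by positivity, div_le_one_of_le₀ (norm_sum_smul_sq_le_sum_mul_norm_sq ht hs w) hden⟩

lemma bddBelow_realizationRatios (ht : ∀ i, 0 ≤ t i) (hs : ∑ i, t i = 1) :
    BddBelow (realizationRatios b v t) :=
  bddBelow_Icc.mono (realizationRatios_subset_Icc ht hs)

lemma realizationRatios_nonempty (b : T) (v : Fin m → T) (t : Fin m → ℝ) :
    (realizationRatios b v t).Nonempty :=
  ⟨_, ratio_mem_realizationRatios (E := ℝ) t (w := fun i => dist b (v i)) (fun i => by simp)
    fun i j => by simpa only [Real.norm_eq_abs, dist_comm b] using abs_dist_sub_le (v i) (v j) b⟩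

lemma deltaConfig_mem_Icc (ht : ∀ i, 0 ≤ t i) (hs : ∑ i, t i = 1) :
    deltaConfig b v t ∈ Set.Icc 0 1 := by
  obtain ⟨r, hr⟩ := realizationRatios_nonempty b v t
  have hr' := realizationRatios_subset_Icc ht hs hr
  exact ⟨le_csInf ⟨r, hr⟩ fun s hs' => (realizationRatios_subset_Icc ht hs hs').1,
    csInf_le_of_le (bddBelow_realizationRatios ht hs) hr hr'.2⟩

lemma deltaTotal_nonneg (T : Type*) [MetricSpace T] : 0 ≤ deltaTotal T :=
  Real.sSup_nonneg <| by
    rintro _ ⟨m, v, t, b, -, ht, hs, -, rfl⟩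
    exact (deltaConfig_mem_Icc (fun i => (ht i).le) hs).1

end Realizations

section FiberWeights

variable {ι κ : Type*} [Fintype ι] [DecidableEq κ]

lemma exists_injective_comp_surjective {α : Type*} {m : ℕ} (v : Fin m → α) :
    ∃ (k : ℕ) (u : Fin k → α) (c : Fin m → Fin k),
      Function.Injective u ∧ Function.Surjective c ∧ u ∘ c = v := by
  classical
  let e := Fintype.equivFin (Set.range v)
  refine ⟨_, Subtype.val ∘ e.symm, e ∘ Set.rangeFactorization v,
    Subtype.val_injective.comp e.symm.injective,
    e.surjective.comp Set.rangeFactorization_surjective, ?_⟩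
  ext i
  simp [Set.rangeFactorization]

def fiberWeights (c : ι → κ) (t : ι → ℝ) (j : κ) : ℝ := ∑ i with c i = j, t i

lemma fiberWeights_pos {c : ι → κ} (hc : Function.Surjective c) {t : ι → ℝ} (ht : ∀ i, 0 < t i)
    (j : κ) : 0 < fiberWeights c t j := by
  obtain ⟨i, rfl⟩ := hc j
  exact sum_pos (fun i _ => ht i) ⟨i, by simp⟩

variable [Fintype κ] (c : ι → κ) (t : ι → ℝ)

lemma sum_fiberWeights_smul {M : Type*} [AddCommMonoid M] [Module ℝ M] (u : κ → M) :
    ∑ j, fiberWeights c t j • u j = ∑ i, t i • u (c i) := by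
  rw [← sum_fiberwise univ c fun i => t i • u (c i)]
  refine sum_congr rfl fun j _ => ?_
  rw [fiberWeights, sum_smul]
  exact sum_congr rfl fun i hi => by rw [(mem_filter.1 hi).2]

lemma sum_fiberWeights : ∑ j, fiberWeights c t j = ∑ i, t i :=
  sum_fiberwise univ c t

end FiberWeights

section Merging

variable {T : Type*} [MetricSpace T] {m k : ℕ} {b : T} {v : Fin m → T} {t : Fin m → ℝ}
  {u : Fin k → T} {c : Fin m → Fin k}

lemma IsWBarycenter.fiberWeights (hb : IsWBarycenter b v t) (huc : u ∘ c = v) :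
    IsWBarycenter b u (fiberWeights c t) := by
  subst huc
  intro q
  have hsum (p : T) := sum_fiberWeights_smul c t fun j => dist (u j) p ^ 2
  simp only [smul_eq_mul] at hsum
  rw [hsum, hsum]
  exact hb q

lemma realizationRatios_fiberWeights_subset (huc : u ∘ c = v) :
    realizationRatios b u (fiberWeights c t) ⊆ realizationRatios b v t := by
  subst huc
  rintro _ ⟨N, w, ⟨hnorm, hdist⟩, rfl⟩
  refine ⟨N, w ∘ c, ⟨fun i => hnorm (c i), fun i j => hdist (c i) (c j)⟩, ?_⟩
  have hden := sum_fiberWeights_smul c t fun j => ‖w j‖ ^ 2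
  simp only [smul_eq_mul] at hden
  rw [sum_fiberWeights_smul, hden, Function.comp_def]

lemma deltaConfig_le_deltaTotal (ht : ∀ i, 0 < t i) (hs : ∑ i, t i = 1)
    (hb : IsWBarycenter b v t) : deltaConfig b v t ≤ deltaTotal T := by
  obtain ⟨k, u, c, hu, hc, huc⟩ := exists_injective_comp_surjective v
  have hbdd : BddAbove {r : ℝ | ∃ (m : ℕ) (vv : Fin m → T) (t : Fin m → ℝ) (b : T),
      Function.Injective vv ∧ (∀ i, 0 < t i) ∧ (∑ i, t i = 1) ∧
      IsWBarycenter b vv t ∧ r = deltaConfig b vv t} := by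
    refine ⟨1, ?_⟩
    rintro _ ⟨_, _, _, _, -, ht, hs, -, rfl⟩
    exact (deltaConfig_mem_Icc (fun i => (ht i).le) hs).2
  calc deltaConfig b v t ≤ deltaConfig b u (fiberWeights c t) :=
        csInf_le_csInf (bddBelow_realizationRatios (fun i => (ht i).le) hs)
          (realizationRatios_nonempty _ _ _) (realizationRatios_fiberWeights_subset huc)
    _ ≤ deltaTotal T :=
        le_csSup hbdd ⟨k, u, _, b, hu, fiberWeights_pos hc ht, (sum_fiberWeights c t).trans hs,
          hb.fiberWeights huc, rfl⟩

lemma exists_isRealization_ratio_lt (ht : ∀ i, 0 < t i) (hs : ∑ i, t i = 1)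
    (hb : IsWBarycenter b v t) {ε : ℝ} (hε : 0 < ε) :
    ∃ (N : ℕ) (w : Fin m → EuclideanSpace ℝ (Fin N)), IsRealization b v w ∧
      ‖∑ i, t i • w i‖ ^ 2 / ∑ i, t i * ‖w i‖ ^ 2 < deltaTotal T + ε := by
  obtain ⟨_, ⟨N, w, hw, rfl⟩, hlt⟩ := Real.lt_sInf_add_pos (realizationRatios_nonempty b v t) hε
  exact ⟨N, w, hw, hlt.trans_le (add_le_add_left (deltaConfig_le_deltaTotal ht hs hb) ε)⟩

end Merging

lemma add_div_add_le_of_div_le {A₁ A₂ D₁ D₂ M : ℝ} (hA₁ : 0 ≤ A₁) (hA₂ : 0 ≤ A₂) (hAD₁ : A₁ ≤ D₁)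
    (hAD₂ : A₂ ≤ D₂) (hM₁ : A₁ / D₁ ≤ M) (hM₂ : A₂ / D₂ ≤ M) : (A₁ + A₂) / (D₁ + D₂) ≤ M := by
  have le_mul {A D : ℝ} (hA : 0 ≤ A) (hAD : A ≤ D) (hM : A / D ≤ M) : A ≤ M * D := by
    rcases (hA.trans hAD).eq_or_lt with hD | hD
    · rw [← hD, mul_zero]
      exact hAD.trans hD.symm.le
    · exact (div_le_iff₀ hD).1 hM
  exact div_le_of_le_mul₀ (by linarith) ((div_nonneg hA₁ (hA₁.trans hAD₁)).trans hM₁)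
    (by rw [mul_add]; exact add_le_add (le_mul hA₁ hAD₁ hM₁) (le_mul hA₂ hAD₂ hM₂))

section ProductBarycenter

variable {T₁ T₂ : Type*} [MetricSpace T₁] [MetricSpace T₂]

lemma WithLp.prod_dist_sq_eq_of_L2 (x y : WithLp 2 (T₁ × T₂)) :
    dist x y ^ 2 = dist x.fst y.fst ^ 2 + dist x.snd y.snd ^ 2 := by
  rw [WithLp.prod_dist_eq_add (by norm_num)]
  simp only [ENNReal.toReal_ofNat, Real.rpow_two, ← Real.sqrt_eq_rpow]
  exact Real.sq_sqrt (by positivity)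

variable {ι : Type*} [Fintype ι] {b : WithLp 2 (T₁ × T₂)} {v : ι → WithLp 2 (T₁ × T₂)}
  {t : ι → ℝ}

lemma IsWBarycenter.fst (hb : IsWBarycenter b v t) :
    IsWBarycenter b.fst (fun i => (v i).fst) t := by
  intro q
  have h := hb (WithLp.toLp 2 (q, b.snd))
  simp only [WithLp.prod_dist_sq_eq_of_L2, mul_add, sum_add_distrib] at h
  simpa using le_of_add_le_add_right h

lemma IsWBarycenter.snd (hb : IsWBarycenter b v t) :
    IsWBarycenter b.snd (fun i => (v i).snd) t := by
  intro q
  have h := hb (WithLp.toLp 2 (b.fst, q))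
  simp only [WithLp.prod_dist_sq_eq_of_L2, mul_add, sum_add_distrib] at h
  simpa using le_of_add_le_add_left h

end ProductBarycenter

section ProductRealization

variable {T₁ T₂ : Type*} [MetricSpace T₁] [MetricSpace T₂] {m : ℕ} {b : WithLp 2 (T₁ × T₂)}
  {v : Fin m → WithLp 2 (T₁ × T₂)} {t : Fin m → ℝ}

lemma ratio_prod_mem_realizationRatios {N₁ N₂ : ℕ} {w₁ : Fin m → EuclideanSpace ℝ (Fin N₁)}
    {w₂ : Fin m → EuclideanSpace ℝ (Fin N₂)} (hw₁ : IsRealization b.fst (fun i => (v i).fst) w₁)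
    (hw₂ : IsRealization b.snd (fun i => (v i).snd) w₂) :
    (‖∑ i, t i • w₁ i‖ ^ 2 + ‖∑ i, t i • w₂ i‖ ^ 2) /
      (∑ i, t i * ‖w₁ i‖ ^ 2 + ∑ i, t i * ‖w₂ i‖ ^ 2) ∈ realizationRatios b v t := by
  let w i := WithLp.toLp 2 (w₁ i, w₂ i)
  have hnorm i : ‖w i‖ = dist b (v i) := by
    rw [← sq_eq_sq₀ (norm_nonneg _) dist_nonneg, WithLp.prod_norm_sq_eq_of_L2,
      WithLp.prod_dist_sq_eq_of_L2, ← hw₁.1 i, ← hw₂.1 i]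
    rfl
  have hdist i j : ‖w i - w j‖ ≤ dist (v i) (v j) := by
    rw [← pow_le_pow_iff_left₀ (norm_nonneg _) dist_nonneg two_ne_zero,
      WithLp.prod_norm_sq_eq_of_L2, WithLp.prod_dist_sq_eq_of_L2]
    exact add_le_add (pow_le_pow_left₀ (norm_nonneg _) (hw₁.2 i j) 2)
      (pow_le_pow_left₀ (norm_nonneg _) (hw₂.2 i j) 2)
  have hsum : ∑ i, t i • w i = WithLp.toLp 2 (∑ i, t i • w₁ i, ∑ i, t i • w₂ i) := by
    apply WithLp.ofLp_injective
    simp only [w, WithLp.ofLp_sum, WithLp.ofLp_smul]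
    ext1 <;> simp only [Prod.fst_sum, Prod.snd_sum, Prod.smul_fst, Prod.smul_snd]
  convert ratio_mem_realizationRatios t hnorm hdist using 2
  · rw [hsum, WithLp.prod_norm_sq_eq_of_L2, WithLp.toLp_fst, WithLp.toLp_snd]
  · simp only [← sum_add_distrib, ← mul_add, w, WithLp.prod_norm_sq_eq_of_L2, WithLp.toLp_fst,
      WithLp.toLp_snd]

lemma deltaConfig_prod_le (ht : ∀ i, 0 < t i) (hs : ∑ i, t i = 1) (hb : IsWBarycenter b v t) :
    deltaConfig b v t ≤ max (deltaTotal T₁) (deltaTotal T₂) := by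
  refine le_of_forall_pos_le_add fun ε hε => ?_
  obtain ⟨N₁, w₁, hw₁, hlt₁⟩ := exists_isRealization_ratio_lt ht hs hb.fst hε
  obtain ⟨N₂, w₂, hw₂, hlt₂⟩ := exists_isRealization_ratio_lt ht hs hb.snd hε
  have ht₀ i : 0 ≤ t i := (ht i).le
  calc deltaConfig b v t ≤ _ :=
        csInf_le (bddBelow_realizationRatios ht₀ hs) (ratio_prod_mem_realizationRatios hw₁ hw₂)
    _ ≤ max (deltaTotal T₁) (deltaTotal T₂) + ε :=
        add_div_add_le_of_div_le (sq_nonneg _) (sq_nonneg _)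
          (norm_sum_smul_sq_le_sum_mul_norm_sq ht₀ hs w₁)
          (norm_sum_smul_sq_le_sum_mul_norm_sq ht₀ hs w₂)
          (hlt₁.le.trans (by gcongr; exact le_max_left _ _))
          (hlt₂.le.trans (by gcongr; exact le_max_right _ _))

end ProductRealization

theorem stmt7_general {T₁ T₂ : Type*} [MetricSpace T₁] [MetricSpace T₂] :
    deltaTotal (WithLp 2 (T₁ × T₂)) ≤ max (deltaTotal T₁) (deltaTotal T₂) ∧
    (deltaTotal T₁ = 0 → deltaTotal T₂ = 0 → deltaTotal (WithLp 2 (T₁ × T₂)) = 0) := by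
  have hle : deltaTotal (WithLp 2 (T₁ × T₂)) ≤ max (deltaTotal T₁) (deltaTotal T₂) := by
    refine Real.sSup_le ?_ (le_max_of_le_left (deltaTotal_nonneg T₁))
    rintro _ ⟨m, v, t, b, -, ht, hs, hb, rfl⟩
    exact deltaConfig_prod_le ht hs hb
  refine ⟨hle, fun h₁ h₂ => le_antisymm ?_ (deltaTotal_nonneg _)⟩
  simpa [h₁, h₂] using hle

/-- `δ(T₁ × T₂) ≤ max{δ(T₁), δ(T₂)}` for the `l²`-product of two Hadamard spaces;
in particular the product of two flexible Hadamard spaces is flexible. -/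
theorem stmt7 {T₁ T₂ : Type*} [MetricSpace T₁] [MetricSpace T₂]
    [HadamardSpace T₁] [HadamardSpace T₂] :
    deltaTotal (WithLp 2 (T₁ × T₂)) ≤ max (deltaTotal T₁) (deltaTotal T₂) ∧
    (deltaTotal T₁ = 0 → deltaTotal T₂ = 0 → deltaTotal (WithLp 2 (T₁ × T₂)) = 0) :=
  stmt7_general
end

section
/- The n-pod T_n (n ≥ 3 half-lines glued at a common origin) is flexible: δ(T_n, 0) = 0. That is, for every finite configuration of nonzero points v_1,...,v_m ∈ T_n with positive weights t_1,...,t_m summing to 1 whose barycenter is the origin, there exist vectors 𝐯_1,...,𝐯_m ∈ ℝ² with ‖𝐯_i‖ = |v_i|, ‖𝐯_i − 𝐯_j‖ ≤ d(v_i,v_j), and Σ t_i 𝐯_i = 0. -/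
open Filter Metric Set Topology

/-!
Put `a s = ∑ t i * |v i|` over the points on leg `s`. Testing the barycenter condition at the
point of leg `s` at distance `2 * a s - ∑ a` from the origin shows `2 * a s ≤ ∑ a` for every
leg. Nonnegative lengths with this property close up into a planar polygon of unit directions:
splitting the legs into three consecutive blocks whose sums satisfy the triangle inequalities
reduces this to a triangle, which the intermediate value theorem provides. Sending a point on
leg `s` to its distance to the origin times the direction of leg `s` is then a realization.
-/

open Finset

theorem exists_le_and_le_succ {α : Type*} [LinearOrder α] {f : ℕ → α} {c : α} {N : ℕ}
    (h₀ : f 0 ≤ c) (hN : c ≤ f (N + 1)) : ∃ k ≤ N, f k ≤ c ∧ c ≤ f (k + 1) := by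
  induction N with
  | zero => exact ⟨0, le_rfl, h₀, hN⟩
  | succ N ih =>
    by_cases h : c ≤ f (N + 1)
    · obtain ⟨k, hk, hck⟩ := ih h
      exact ⟨k, hk.trans N.le_succ, hck⟩
    · exact ⟨N + 1, le_rfl, (not_le.1 h).le, hN⟩

theorem exists_fin_three_two_mul_sum_fiber_le {n : ℕ} (a : Fin n → ℝ) (ha : ∀ s, 0 ≤ a s)
    (hhalf : ∀ s, 2 * a s ≤ ∑ s, a s) :
    ∃ g : Fin n → Fin 3, ∀ j, 2 * ∑ s with g s = j, a s ≤ ∑ s, a s := by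
  rcases n with _ | N
  · exact ⟨Fin.elim0, by simp⟩
  have hA : 0 ≤ ∑ s, a s := sum_nonneg fun s _ => ha s
  set f : ℕ → ℝ := fun k => ∑ s with s.val < k, a s
  obtain ⟨k, hkN, hk, hk₁⟩ := exists_le_and_le_succ (f := fun k => 2 * f k) (c := ∑ s, a s)
    (N := N) (by simpa only [not_lt_zero, filter_false, sum_empty, mul_zero, f] using hA)
    (by simp only [Order.lt_add_one_iff, Fin.is_le, filter_true, f]; linarith)
  -- `K` is the leg at which the prefix sums of `a` cross half the total.
  set K : Fin (N + 1) := ⟨k, by omega⟩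
  set g : Fin (N + 1) → Fin 3 := fun s => if s < K then 0 else if s = K then 1 else 2
  have fiber : ∀ j : Fin 3, ∀ s, g s = j ↔
      (j = 0 ∧ s.val < k) ∨ (j = 1 ∧ s = K) ∨ (j = 2 ∧ k < s.val) := by
    intro j s
    simp only [g, Fin.lt_def, Fin.ext_iff, K]
    split_ifs <;> fin_cases j <;> simp <;> omega
  refine ⟨g, fun j => ?_⟩
  fin_cases j
  · simpa [fiber] using hk
  · simpa [fiber, filter_eq'] using hhalf K
  · have hsplit := sum_filter_add_sum_filter_not univ (fun s : Fin (N + 1) => s.val < k + 1) a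
    have hfiber : ∑ s with g s = 2, a s = ∑ s with ¬ s.val < k + 1, a s := by
      congr 1; ext s; simp [fiber]
    simp only [f] at hk₁
    show 2 * ∑ s with g s = 2, a s ≤ _
    linarith

open Complex in
theorem exists_unit_triangle {p q r : ℝ} (hp : 0 ≤ p) (hq : 0 ≤ q)
    (h₁ : p ≤ q + r) (h₂ : q ≤ p + r) (h₃ : r ≤ p + q) :
    ∃ u₁ u₂ u₃ : ℂ, ‖u₁‖ = 1 ∧ ‖u₂‖ = 1 ∧ ‖u₃‖ = 1 ∧ p • u₁ + q • u₂ + r • u₃ = 0 := by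
  set z : ℝ → ℂ := fun θ => p + q * exp (θ * I)
  have hzπ : z Real.pi = ((p - q : ℝ) : ℂ) := by
    simp only [exp_pi_mul_I, mul_neg, mul_one, ofReal_sub, z]
    ring
  have hr : r ∈ Icc ‖z Real.pi‖ ‖z 0‖ := by
    rw [hzπ, show z 0 = ((p + q : ℝ) : ℂ) by simp [z], norm_real, norm_real, Real.norm_eq_abs,
      Real.norm_eq_abs, abs_of_nonneg (by positivity : 0 ≤ p + q)]
    exact ⟨abs_le.2 ⟨by linarith, by linarith⟩, h₃⟩
  obtain ⟨θ, -, hθ : ‖z θ‖ = r⟩ := intermediate_value_Icc' Real.pi_pos.le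
    (Continuous.continuousOn (f := fun θ => ‖z θ‖) (by fun_prop)) hr
  rcases (norm_nonneg _).trans_eq hθ |>.eq_or_lt with hr0 | hr0
  · refine ⟨1, exp (θ * I), 1, by simp, by simp, by simp, ?_⟩
    simpa [← hr0, z, Complex.real_smul] using hθ
  · refine ⟨1, exp (θ * I), -(r⁻¹ • z θ), by simp, by simp, ?_, ?_⟩
    · rw [norm_neg, norm_smul, hθ, Real.norm_of_nonneg (inv_nonneg.2 hr0.le),
        inv_mul_cancel₀ hr0.ne']
    · rw [smul_neg, smul_smul, mul_inv_cancel₀ hr0.ne', one_smul]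
      simp [z, Complex.real_smul]

theorem exists_unit_sum_smul_eq_zero {n : ℕ} (a : Fin n → ℝ) (ha : ∀ s, 0 ≤ a s)
    (hhalf : ∀ s, 2 * a s ≤ ∑ s, a s) :
    ∃ e : Fin n → ℂ, (∀ s, ‖e s‖ = 1) ∧ ∑ s, a s • e s = 0 := by
  obtain ⟨g, hg⟩ := exists_fin_three_two_mul_sum_fiber_le a ha hhalf
  set b : Fin 3 → ℝ := fun j => ∑ s with g s = j, a s
  have hb : ∀ j, 0 ≤ b j := fun j => sum_nonneg fun s _ => ha s
  have hsum : b 0 + b 1 + b 2 = ∑ s, a s := by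
    rw [← Fin.sum_univ_three, sum_fiberwise]
  have h₀ : 2 * b 0 ≤ ∑ s, a s := hg 0
  have h₁ : 2 * b 1 ≤ ∑ s, a s := hg 1
  have h₂ : 2 * b 2 ≤ ∑ s, a s := hg 2
  obtain ⟨u₁, u₂, u₃, hu₁, hu₂, hu₃, hu⟩ :=
    exists_unit_triangle (r := b 2) (hb 0) (hb 1) (by linarith) (by linarith) (by linarith)
  set u : Fin 3 → ℂ := ![u₁, u₂, u₃]
  refine ⟨fun s => u (g s), fun s => ?_, ?_⟩
  · show ‖u (g s)‖ = 1
    generalize g s = j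
    fin_cases j <;> assumption
  calc ∑ s, a s • u (g s) = ∑ j, b j • u j := by
        rw [← sum_fiberwise univ g]
        refine sum_congr rfl fun j _ => ?_
        rw [sum_smul]
        exact sum_congr rfl fun s hs => by rw [(mem_filter.1 hs).2]
    _ = 0 := by simpa [Fin.sum_univ_three, u] using hu

/-- The `n`-pod: points are encoded as pairs `(s, r)` with `s` the index of the
half-line and `r ≥ 0` the distance to the origin (all `(s, 0)` represent the origin).
Its path metric. -/
noncomputable def podDist {n : ℕ} (x y : Fin n × ℝ) : ℝ :=
  if x.1 = y.1 then |x.2 - y.2| else x.2 + y.2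

section Pod

variable {n m : ℕ}

theorem podDist_sq_mk (x : Fin n × ℝ) (s : Fin n) (r : ℝ) :
    podDist x (s, r) ^ 2 = x.2 ^ 2 + r ^ 2 - 2 * r * (if x.1 = s then x.2 else -x.2) := by
  unfold podDist
  split_ifs <;> simp only [sq_abs] <;> ring

theorem norm_smul_sub_smul_le_podDist {F : Type*} [NormedAddCommGroup F] [NormedSpace ℝ F]
    {e : Fin n → F} (he : ∀ s, ‖e s‖ = 1) {x y : Fin n × ℝ} (hx : 0 ≤ x.2) (hy : 0 ≤ y.2) :
    ‖x.2 • e x.1 - y.2 • e y.1‖ ≤ podDist x y := by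
  unfold podDist
  split_ifs with h
  · rw [h, ← sub_smul, norm_smul, he, mul_one, Real.norm_eq_abs]
  · calc ‖x.2 • e x.1 - y.2 • e y.1‖ ≤ ‖x.2 • e x.1‖ + ‖y.2 • e y.1‖ := norm_sub_le _ _
      _ = x.2 + y.2 := by
        rw [norm_smul, norm_smul, he, he, Real.norm_of_nonneg hx, Real.norm_of_nonneg hy,
          mul_one, mul_one]

variable (t : Fin m → ℝ) (v : Fin m → Fin n × ℝ)

noncomputable def legMoment (s : Fin n) : ℝ := ∑ i with (v i).1 = s, t i * (v i).2

theorem sum_legMoment : ∑ s, legMoment t v s = ∑ i, t i * (v i).2 :=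
  sum_fiberwise _ _ _

theorem sum_smul_smul_eq_sum_legMoment_smul {F : Type*} [AddCommGroup F] [Module ℝ F]
    (e : Fin n → F) : ∑ i, t i • (v i).2 • e (v i).1 = ∑ s, legMoment t v s • e s := by
  rw [← sum_fiberwise univ (fun i => (v i).1)]
  refine sum_congr rfl fun s _ => ?_
  rw [legMoment, sum_smul]
  exact sum_congr rfl fun i hi => by rw [(mem_filter.1 hi).2, smul_smul]

theorem sum_mul_podDist_sq_mk (s : Fin n) (r : ℝ) :
    ∑ i, t i * podDist (v i) (s, r) ^ 2 = ∑ i, t i * (v i).2 ^ 2 + r ^ 2 * ∑ i, t i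
      - 2 * r * (2 * legMoment t v s - ∑ s', legMoment t v s') := by
  have hsigned : ∑ i, t i * (if (v i).1 = s then (v i).2 else -(v i).2)
      = 2 * legMoment t v s - ∑ i, t i * (v i).2 := by
    rw [← sum_filter_add_sum_filter_not univ (fun i => (v i).1 = s) fun i => t i * (v i).2]
    simp only [mul_ite, mul_neg, sum_ite, sum_neg_distrib, legMoment]
    ring
  rw [sum_legMoment, ← hsigned, mul_sum, mul_sum, ← sum_add_distrib, ← sum_sub_distrib]
  exact sum_congr rfl fun i _ => by rw [podDist_sq_mk]; ring

theorem two_mul_legMoment_le (hsum : ∑ i, t i = 1)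
    (hbary : ∀ q : Fin n × ℝ, 0 ≤ q.2 →
      ∑ i, t i * (v i).2 ^ 2 ≤ ∑ i, t i * podDist (v i) q ^ 2) (s : Fin n) :
    2 * legMoment t v s ≤ ∑ s', legMoment t v s' := by
  by_contra! h
  set r := 2 * legMoment t v s - ∑ s', legMoment t v s'
  have := hbary (s, r) (by simp only [r]; linarith)
  rw [sum_mul_podDist_sq_mk, hsum] at this
  nlinarith

end Pod

theorem stmt10_general {n m : ℕ} (v : Fin m → Fin n × ℝ) (t : Fin m → ℝ)
    (hv : ∀ i, 0 < (v i).2) (ht : ∀ i, 0 < t i) (hsum : ∑ i, t i = 1)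
    (hbary : ∀ q : Fin n × ℝ, 0 ≤ q.2 →
      ∑ i, t i * (v i).2 ^ 2 ≤ ∑ i, t i * podDist (v i) q ^ 2) :
    ∃ w : Fin m → EuclideanSpace ℝ (Fin 2),
      (∀ i, ‖w i‖ = (v i).2) ∧ (∀ i j, ‖w i - w j‖ ≤ podDist (v i) (v j)) ∧
      ∑ i, t i • w i = 0 := by
  obtain ⟨e, he, hsum_e⟩ := exists_unit_sum_smul_eq_zero (legMoment t v)
    (fun s => sum_nonneg fun i _ => (mul_pos (ht i) (hv i)).le)
    (two_mul_legMoment_le t v hsum hbary)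
  set E := Complex.orthonormalBasisOneI.repr
  have hE : ∀ s, ‖E (e s)‖ = 1 := fun s => by rw [E.norm_map, he]
  refine ⟨fun i => (v i).2 • E (e (v i).1), fun i => ?_, fun i j => ?_, ?_⟩
  · rw [norm_smul, hE, mul_one, Real.norm_of_nonneg (hv i).le]
  · exact norm_smul_sub_smul_le_podDist hE (hv i).le (hv j).le
  · rw [sum_smul_smul_eq_sum_legMoment_smul t v (fun s => E (e s))]
    simp only [← E.map_smul, ← map_sum, hsum_e, map_zero]

/-- The `n`-pod is flexible at the origin: every weighted configuration of nonzero
points with barycenter at the origin admits a planar realization with vanishing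
weighted sum. -/
theorem stmt10 {n m : ℕ} (hn : 3 ≤ n) (v : Fin m → Fin n × ℝ) (t : Fin m → ℝ)
    (hv : ∀ i, 0 < (v i).2) (ht : ∀ i, 0 < t i) (hsum : ∑ i, t i = 1)
    (hbary : ∀ q : Fin n × ℝ, 0 ≤ q.2 →
      ∑ i, t i * (v i).2 ^ 2 ≤ ∑ i, t i * podDist (v i) q ^ 2) :
    ∃ w : Fin m → EuclideanSpace ℝ (Fin 2),
      (∀ i, ‖w i‖ = (v i).2) ∧ (∀ i j, ‖w i - w j‖ ≤ podDist (v i) (v j)) ∧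
      ∑ i, t i • w i = 0 :=
  stmt10_general v t hv ht hsum hbary
end

section
/- Let m be an admissible weight on a locally finite simplicial complex X, i.e., m(s) = Σ_{t ∈ X(k+1)_s} m(t) for every k-simplex s contained in some (k+1)-simplex. Let Γ act by weight-preserving simplicial automorphisms, properly discontinuously and cofinitely on X, and let ψ be a Γ-invariant real function on the set of ordered l-simplices. Then for 0 ≤ k ≤ l−1, Σ_{u ∈ F⃗(l)} ψ(u)/|Γ_u| = Σ_{s ∈ F⃗(k)} (1/|Γ_s|) Σ_{u ∈ X⃗(l)_s} ψ(u), where F⃗(j) denotes any set of representatives of the Γ-orbits in the set X⃗(j) of ordered j-simplices, Γ_s is the stabilizer of s, and X⃗(l)_s is the set of ordered l-simplices whose first k+1 vertices form s. -/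
open Filter Set Topology

/-- An ordered simplex of the simplicial complex `K` (given as its set of faces):
an injective tuple of vertices whose image is a face. -/
def IsOrderedSimplex {V : Type*} [DecidableEq V] (K : Set (Finset V)) {j : ℕ}
    (s : Fin j → V) : Prop :=
  Function.Injective s ∧ Finset.image s Finset.univ ∈ K

/-- An admissible weight on the simplicial complex `K`: positive, and the weight of a
face equals the sum of the weights of the faces of one more dimension containing it. -/
def IsAdmissibleWeight {V : Type*} (K : Set (Finset V)) (m : Finset V → ℝ) : Prop :=
  (∀ s ∈ K, 0 < m s) ∧
  ∀ s ∈ K, (∃ t ∈ K, s ⊆ t ∧ t.card = s.card + 1) →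
    m s = ∑ᶠ t ∈ {t | t ∈ K ∧ s ⊆ t ∧ t.card = s.card + 1}, m t

/-- `F` is a set of representatives of the `Γ`-orbits of ordered simplices of `K`. -/
def IsRepSet {V : Type*} [DecidableEq V] (Γ : Type*) [Group Γ] [MulAction Γ V]
    (K : Set (Finset V)) {j : ℕ} (F : Set (Fin j → V)) : Prop :=
  (∀ s ∈ F, IsOrderedSimplex K s) ∧
  ∀ s : Fin j → V, IsOrderedSimplex K s →
    ∃! t : Fin j → V, t ∈ F ∧ ∃ γ : Γ, γ • s = t




/-- Coset bijection: elements carrying `r v` to `s₀` versus stabilizer of `s₀`. -/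
lemma aux_card_coset {β Γ : Type*} [Group Γ] [MulAction Γ β]
    (x s₀ : β) (γ₀ : Γ) (hγ₀ : γ₀ • x = s₀) :
    Nat.card {γ : Γ // γ • x = s₀} = Nat.card (MulAction.stabilizer Γ s₀) := by
  refine Nat.card_congr (Equiv.ofBijective
    (fun δ => ⟨δ.1 * γ₀⁻¹, ?_⟩) ⟨?_, ?_⟩)
  · have : γ₀⁻¹ • s₀ = x := by rw [← hγ₀, inv_smul_smul]
    simp only [MulAction.mem_stabilizer_iff, mul_smul, this, δ.2]
  · intro a b hab
    have : a.1 * γ₀⁻¹ = b.1 * γ₀⁻¹ := congrArg Subtype.val hab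
    ext
    exact mul_right_cancel this
  · intro σ
    refine ⟨⟨σ.1 * γ₀, ?_⟩, ?_⟩
    · have := σ.2
      rw [MulAction.mem_stabilizer_iff] at this
      rw [mul_smul, hγ₀, this]
    · ext; simp

/-- Key counting: the coset `{γ | γ • r v = s₀}` is in bijection with
`B × stabilizer v` where `B` is the set of `u` with `r u = s₀` equivalent to `v`. -/
lemma aux_card_fiber {α β Γ : Type*} [Group Γ] [MulAction Γ α] [MulAction Γ β]
    (r : α → β) (hr : ∀ (γ : Γ) (a : α), r (γ • a) = γ • r a) (v : α) (s₀ : β) :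
    Nat.card {γ : Γ // γ • r v = s₀} =
      Nat.card {u : α // r u = s₀ ∧ ∃ γ : Γ, γ • u = v} *
        Nat.card (MulAction.stabilizer Γ v) := by
  classical
  rw [← Nat.card_prod]
  refine (Nat.card_congr (Equiv.ofBijective ?_ ⟨?_, ?_⟩)).symm
  · -- map B × Stab v → C
    refine fun p => ⟨(p.1.2.2.choose)⁻¹ * p.2.1, ?_⟩
    obtain ⟨⟨u, hu, hex⟩, σ⟩ := p
    have hg : hex.choose • u = v := hex.choose_spec
    have hσ : σ.1 • v = v := σ.2
    have h1 : σ.1 • r v = r v := by rw [← hr, hσ]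
    have h2 : hex.choose⁻¹ • v = u := by rw [inv_smul_eq_iff]; exact hg.symm
    have h3 : hex.choose⁻¹ • r v = r u := by rw [← hr, h2]
    simp only [mul_smul, h1, h3, hu]
  · rintro ⟨⟨u, hu⟩, σ⟩ ⟨⟨u', hu'⟩, σ'⟩ h
    have h0 : (hu.2.choose)⁻¹ * σ.1 = (hu'.2.choose)⁻¹ * σ'.1 := congrArg Subtype.val h
    have hg : hu.2.choose • u = v := hu.2.choose_spec
    have hg' : hu'.2.choose • u' = v := hu'.2.choose_spec
    have hσ : σ.1 • v = v := σ.2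
    have hσ' : σ'.1 • v = v := σ'.2
    have huu : u = u' := by
      have e1 : ((hu.2.choose)⁻¹ * σ.1) • v = u := by
        rw [mul_smul, hσ, inv_smul_eq_iff]; exact hg.symm
      have e2 : ((hu'.2.choose)⁻¹ * σ'.1) • v = u' := by
        rw [mul_smul, hσ', inv_smul_eq_iff]; exact hg'.symm
      rw [← e1, ← e2, h0]
    subst huu
    have hσσ : σ = σ' := by
      ext
      exact mul_left_cancel h0
    rw [hσσ]
  · intro δ
    have hδ : δ.1 • r v = s₀ := δ.2
    have h1 : r (δ.1 • v) = s₀ := by rw [hr, hδ]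
    have h2 : ∃ γ : Γ, γ • (δ.1 • v) = v := ⟨δ.1⁻¹, inv_smul_smul _ _⟩
    refine ⟨⟨⟨δ.1 • v, h1, h2⟩, ⟨h2.choose * δ.1, ?_⟩⟩, ?_⟩
    · have := h2.choose_spec
      rw [MulAction.mem_stabilizer_iff, mul_smul]
      exact this
    · ext
      simp [inv_mul_cancel_left]

/-- Lemma 2.2 of Izeki–Nayatani: for a `Γ`-invariant function `ψ` on ordered
`l`-simplices (`l+1` vertices) of a cofinite, properly discontinuous, weight-preserving
simplicial action, the weighted sum over representatives of `l`-simplices equals the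
double sum over representatives of `k`-simplices and their extensions. -/
theorem stmt14 {V : Type*} [DecidableEq V] (K : Set (Finset V))
    (hK : ∀ s ∈ K, s.Nonempty)
    (hdown : ∀ s ∈ K, ∀ t : Finset V, t ⊆ s → t.Nonempty → t ∈ K)
    (m : Finset V → ℝ) (hm : IsAdmissibleWeight K m)
    (Γ : Type*) [Group Γ] [MulAction Γ V]
    (hKΓ : ∀ (γ : Γ), ∀ s ∈ K, Finset.image (γ • ·) s ∈ K)
    (hmΓ : ∀ (γ : Γ), ∀ s ∈ K, m (Finset.image (γ • ·) s) = m s)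
    (hstab : ∀ (j : ℕ) (s : Fin j → V), IsOrderedSimplex K s →
      Set.Finite {γ : Γ | γ • s = s})
    (k l : ℕ) (hkl : k < l)
    (Fk : Set (Fin (k + 1) → V)) (Fl : Set (Fin (l + 1) → V))
    (hFk : IsRepSet Γ K Fk) (hFl : IsRepSet Γ K Fl)
    (hFkfin : Fk.Finite) (hFlfin : Fl.Finite)
    (hlocfin : ∀ s : Fin (k + 1) → V, Set.Finite {u : Fin (l + 1) → V |
      IsOrderedSimplex K u ∧ ∀ i : Fin (k + 1), u (Fin.castLE (by omega) i) = s i})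
    (ψ : (Fin (l + 1) → V) → ℝ) (hψ : ∀ (γ : Γ) (u : Fin (l + 1) → V), ψ (γ • u) = ψ u) :
    (∑ᶠ u ∈ Fl, ψ u / (Nat.card (MulAction.stabilizer Γ u) : ℝ))
      = ∑ᶠ s ∈ Fk, (1 / (Nat.card (MulAction.stabilizer Γ s) : ℝ)) *
          ∑ᶠ u ∈ {u : Fin (l + 1) → V | IsOrderedSimplex K u ∧
            ∀ i : Fin (k + 1), u (Fin.castLE (by omega) i) = s i}, ψ u := by
  classical
  obtain ⟨hFk1, hFk2⟩ := hFk
  obtain ⟨hFl1, hFl2⟩ := hFl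
  have hkl' : k + 1 ≤ l + 1 := by omega
  -- the restriction map
  set r : (Fin (l + 1) → V) → (Fin (k + 1) → V) :=
    fun u i => u (Fin.castLE hkl' i) with hrdef
  -- equivariance of r
  have hreq : ∀ (γ : Γ) (u : Fin (l + 1) → V), r (γ • u) = γ • r u := by
    intro γ u; funext i; simp [hrdef, Pi.smul_apply]
  -- the action preserves ordered simplices
  have hsmulOS : ∀ (γ : Γ) (j : ℕ) (u : Fin j → V), IsOrderedSimplex K u →
      IsOrderedSimplex K (γ • u) := by
    intro γ j u hu
    constructor
    · exact (MulAction.injective γ).comp hu.1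
    · have : Finset.image (γ • u) Finset.univ
          = Finset.image (γ • ·) (Finset.image u Finset.univ) := by
        rw [Finset.image_image]; rfl
      rw [this]
      exact hKΓ γ _ hu.2
  -- r of an ordered simplex is an ordered simplex
  have hrOS : ∀ u : Fin (l + 1) → V, IsOrderedSimplex K u → IsOrderedSimplex K (r u) := by
    intro u hu
    constructor
    · intro a b hab
      have := hu.1 hab
      exact Fin.castLE_injective hkl' this
    · apply hdown _ hu.2
      · intro x hx
        simp only [Finset.mem_image] at hx ⊢
        obtain ⟨i, -, hi⟩ := hx
        exact ⟨Fin.castLE hkl' i, Finset.mem_univ _, hi⟩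
      · exact ⟨r u 0, Finset.mem_image_of_mem _ (Finset.mem_univ _)⟩
  -- positivity of stabilizer cardinalities
  have cpos : ∀ (j : ℕ) (s : Fin j → V), IsOrderedSimplex K s →
      0 < Nat.card (MulAction.stabilizer Γ s) := by
    intro j s hs
    have hfin : Set.Finite {γ : Γ | γ • s = s} := hstab j s hs
    have : Finite (MulAction.stabilizer Γ s) := Set.Finite.to_subtype hfin
    exact Nat.card_pos
  -- representative maps
  set Rep : (Fin (l + 1) → V) → (Fin (l + 1) → V) :=
    fun u => if h : IsOrderedSimplex K u then (hFl2 u h).choose else u with hRepdef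
  have hRepMem : ∀ u, (h : IsOrderedSimplex K u) →
      Rep u ∈ Fl ∧ ∃ γ : Γ, γ • u = Rep u := by
    intro u h
    simp only [hRepdef, dif_pos h]
    exact (hFl2 u h).choose_spec.1
  have hRepEq : ∀ u, (h : IsOrderedSimplex K u) → ∀ v ∈ Fl, (∃ γ : Γ, γ • u = v) →
      Rep u = v := by
    intro u h v hv hex
    simp only [hRepdef, dif_pos h]
    exact ((hFl2 u h).choose_spec.2 v ⟨hv, hex⟩).symm
  -- finsets
  set FlF := hFlfin.toFinset with hFlF
  set FkF := hFkfin.toFinset with hFkF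
  set A : (Fin (k + 1) → V) → Finset (Fin (l + 1) → V) :=
    fun s => (hlocfin s).toFinset with hA
  have hAmem : ∀ s u, u ∈ A s ↔ (IsOrderedSimplex K u ∧ r u = s) := by
    intro s u
    simp only [hA, Set.Finite.mem_toFinset, Set.mem_setOf_eq]
    constructor
    · rintro ⟨h1, h2⟩; exact ⟨h1, funext h2⟩
    · rintro ⟨h1, h2⟩; exact ⟨h1, fun i => congrFun h2 i⟩
  -- rewrite finsums as finset sums
  rw [finsum_mem_eq_finite_toFinset_sum _ hFlfin, finsum_mem_eq_finite_toFinset_sum _ hFkfin]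
  have hinner : ∀ s : Fin (k + 1) → V,
      (∑ᶠ u ∈ {u : Fin (l + 1) → V | IsOrderedSimplex K u ∧
        ∀ i : Fin (k + 1), u (Fin.castLE (by omega) i) = s i}, ψ u) = ∑ u ∈ A s, ψ u := by
    intro s
    exact finsum_mem_eq_finite_toFinset_sum _ (hlocfin s)
  simp only [hinner]
  -- fiberwise decomposition of each A s
  have hmaps : ∀ s : Fin (k + 1) → V, ∀ u ∈ A s, Rep u ∈ FlF := by
    intro s u hu
    rw [hFlF, Set.Finite.mem_toFinset]
    exact (hRepMem u ((hAmem s u).1 hu).1).1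
  have step1 : ∀ s : Fin (k + 1) → V,
      (∑ u ∈ A s, ψ u) = ∑ v ∈ FlF, ((A s).filter (fun u => Rep u = v)).card * ψ v := by
    intro s
    rw [← Finset.sum_fiberwise_of_maps_to (hmaps s) ψ]
    refine Finset.sum_congr rfl fun v hv => ?_
    rw [Finset.sum_congr rfl (fun u hu => ?_), Finset.sum_const, nsmul_eq_mul]
    rw [Finset.mem_filter] at hu
    obtain ⟨hu1, hu2⟩ := hu
    obtain ⟨γ, hγ⟩ := (hRepMem u ((hAmem s u).1 hu1).1).2
    rw [← hu2, ← hγ, hψ γ u]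
  have step2 : ∑ s ∈ FkF, (1 / (Nat.card (MulAction.stabilizer Γ s) : ℝ)) * ∑ u ∈ A s, ψ u
      = ∑ v ∈ FlF, ∑ s ∈ FkF, (1 / (Nat.card (MulAction.stabilizer Γ s) : ℝ)) *
          (((A s).filter (fun u => Rep u = v)).card * ψ v) := by
    rw [Finset.sum_comm]
    exact Finset.sum_congr rfl fun s _ => by rw [step1 s, Finset.mul_sum]
  rw [step2]
  refine Finset.sum_congr rfl fun v hv => ?_
  -- now fix v ∈ FlF
  have hvFl : v ∈ Fl := by rwa [hFlF, Set.Finite.mem_toFinset] at hv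
  have hvOS : IsOrderedSimplex K v := hFl1 v hvFl
  have hrvOS : IsOrderedSimplex K (r v) := hrOS v hvOS
  obtain ⟨⟨hs₀Fk, γ₀, hγ₀⟩, hs₀uniq⟩ := (hFk2 (r v) hrvOS).choose_spec
  set s₀ : Fin (k + 1) → V := (hFk2 (r v) hrvOS).choose with hs₀def
  have hs₀OS : IsOrderedSimplex K s₀ := hFk1 s₀ hs₀Fk
  -- the filtered set at s₀ as a set
  have hBset : (((A s₀).filter (fun u => Rep u = v)) : Set (Fin (l + 1) → V))
      = {u : Fin (l + 1) → V | r u = s₀ ∧ ∃ γ : Γ, γ • u = v} := by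
    ext u
    simp only [Finset.coe_filter, Set.mem_setOf_eq, hAmem]
    constructor
    · rintro ⟨⟨huOS, hru⟩, hrep⟩
      obtain ⟨γ, hγ⟩ := (hRepMem u huOS).2
      exact ⟨hru, γ, by rw [hγ, hrep]⟩
    · rintro ⟨hru, γ, hγ⟩
      have huOS : IsOrderedSimplex K u := by
        have := hsmulOS γ⁻¹ (l + 1) v hvOS
        rw [← hγ, inv_smul_smul] at this
        exact this
      exact ⟨⟨huOS, hru⟩, hRepEq u huOS v hvFl ⟨γ, hγ⟩⟩
  -- the cardinality identity
  have hcard : (((A s₀).filter (fun u => Rep u = v)).card : ℕ)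
      * Nat.card (MulAction.stabilizer Γ v) = Nat.card (MulAction.stabilizer Γ s₀) := by
    have h1 : Nat.card {u : Fin (l + 1) → V // r u = s₀ ∧ ∃ γ : Γ, γ • u = v}
        = ((A s₀).filter (fun u => Rep u = v)).card := by
      calc Nat.card {u : Fin (l + 1) → V // r u = s₀ ∧ ∃ γ : Γ, γ • u = v}
          = ({u : Fin (l + 1) → V | r u = s₀ ∧ ∃ γ : Γ, γ • u = v}).ncard :=
            Nat.card_coe_set_eq _
        _ = _ := by rw [← hBset, Set.ncard_coe_finset]
    rw [← h1, ← aux_card_fiber r hreq v s₀, aux_card_coset (r v) s₀ γ₀ hγ₀]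
  -- reduce the sum over FkF to the single term s₀
  have hs₀FkF : s₀ ∈ FkF := by rw [hFkF, Set.Finite.mem_toFinset]; exact hs₀Fk
  rw [Finset.sum_eq_single_of_mem s₀ hs₀FkF]
  · -- the main term
    have hcv : (0 : ℝ) < Nat.card (MulAction.stabilizer Γ v) := by
      exact_mod_cast cpos (l + 1) v hvOS
    have hcs : (0 : ℝ) < Nat.card (MulAction.stabilizer Γ s₀) := by
      exact_mod_cast cpos (k + 1) s₀ hs₀OS
    have hcardR : (((A s₀).filter (fun u => Rep u = v)).card : ℝ)
        * Nat.card (MulAction.stabilizer Γ v) = Nat.card (MulAction.stabilizer Γ s₀) := by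
      exact_mod_cast hcard
    have hn : ((((A s₀).filter (fun u => Rep u = v)).card : ℝ)) ≠ 0 := by
      intro h
      rw [h, zero_mul] at hcardR
      exact hcs.ne hcardR
    rw [← hcardR]
    set n : ℝ := (((A s₀).filter (fun u => Rep u = v)).card : ℝ)
    set cv : ℝ := (Nat.card (MulAction.stabilizer Γ v) : ℝ)
    refine Eq.symm ?_
    calc 1 / (n * cv) * (n * ψ v) = (n / n) * (ψ v / cv) := by ring
      _ = ψ v / cv := by rw [div_self hn, one_mul]
  · -- other terms vanish
    intro s hsFkF hss₀
    have hempty : ((A s).filter (fun u => Rep u = v)) = ∅ := by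
      rw [Finset.filter_eq_empty_iff]
      intro u hu hrep
      have huOS := ((hAmem s u).1 hu).1
      have hru : r u = s := ((hAmem s u).1 hu).2
      obtain ⟨γ, hγ⟩ := (hRepMem u huOS).2
      rw [hrep] at hγ
      have hsFk : s ∈ Fk := by rwa [hFkF, Set.Finite.mem_toFinset] at hsFkF
      have : s = s₀ := by
        refine hs₀uniq s ⟨hsFk, γ⁻¹, ?_⟩
        rw [← hγ, hreq, inv_smul_smul, hru]
      exact hss₀ this
    rw [hempty]
    simp
end

section
/- Let c : [0,∞) → M be a curve in a complete metric space M such that t ↦ |∇₋E|(c(t)) is right-continuous, bounded on compact subintervals of (0,∞), and satisfies d(c(t), c(t+s)) ≤ s·|∇₋E|(c(t)) for all t, s > 0 (i.e., |∇₋E|(c(t)) = sup_{s>0} d(c(t),c(t+s))/s). Then for any 0 < t < t', d(c(t), c(t')) ≤ ∫_t^{t'} |∇₋E|(c(s)) ds. -/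
/-!
By the slope bound, `φ u = d(c t, c u)` has right Dini derivative at most `g u = |∇₋E|(c u)`,
and by right continuity of `g` the primitive `u ↦ ∫_t^u g` has right derivative exactly `g u`;
the comparison principle for right Dini derivatives then gives `φ ≤ ∫_t^· g`. Right continuity
also makes `g` measurable, and boundedness of `g` together with the slope bound makes `c`
Lipschitz on `[t, t']`, so `φ` is continuous there.
-/

open Filter Metric Set Topology

/-- The descending slope `|∇₋E|(x) = max( limsup_{y→x} (E(x)−E(y))/d(x,y), 0 )`. -/
noncomputable def descSlope {M : Type*} [MetricSpace M] (E : M → ℝ) (x : M) : ℝ :=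
  max (Filter.limsup (fun y => (E x - E y) / dist x y) (𝓝[≠] x)) 0

open MeasureTheory

section RightContinuous

variable {β : Type*} [TopologicalSpace β] {f : ℝ → β} {a : ℝ}

/- `f` is the pointwise limit of the countably-valued functions `x ↦ f (⌈x (n+1)⌉ / (n+1))`,
whose arguments approach `x` from the right. -/
theorem measurable_of_continuousWithinAt_Ici [MeasurableSpace β] [BorelSpace β]
    [TopologicalSpace.PseudoMetrizableSpace β] (hf : ∀ x, ContinuousWithinAt f (Ici x) x) :
    Measurable f := by
  set r : ℕ → ℝ → ℝ := fun n x => ⌈x * (n + 1)⌉ / (n + 1)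
  refine measurable_of_tendsto_metrizable (f := fun n x => f (r n x)) (fun n => ?_) ?_
  · exact (measurable_of_countable fun k : ℤ => f (k / (n + 1))).comp
      (Int.measurable_ceil.comp (measurable_id.mul measurable_const))
  refine tendsto_pi_nhds.2 fun x => (hf x).tendsto.comp ?_
  have hn : ∀ n : ℕ, (0 : ℝ) < n + 1 := fun n => by positivity
  have hle : ∀ n, x ≤ r n x := fun n => (le_div_iff₀ (hn n)).2 (Int.le_ceil _)
  have hge : ∀ n, r n x ≤ x + 1 / (n + 1) := fun n => by
    rw [div_le_iff₀ (hn n), add_mul, one_div_mul_cancel (hn n).ne']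
    exact (Int.ceil_lt_add_one _).le
  refine tendsto_nhdsWithin_of_tendsto_nhds_of_eventually_within _ ?_ (.of_forall hle)
  have hupper : Tendsto (fun n : ℕ => x + 1 / ((n : ℝ) + 1)) atTop (𝓝 x) := by
    simpa using tendsto_const_nhds.add (tendsto_one_div_add_atTop_nhds_zero_nat (𝕜 := ℝ))
  exact tendsto_of_tendsto_of_tendsto_of_le_of_le tendsto_const_nhds hupper hle hge

theorem continuousWithinAt_Ici_comp_max (hf : ∀ x ∈ Ici a, ContinuousWithinAt f (Ici x) x)
    (x : ℝ) : ContinuousWithinAt (fun u => f (max a u)) (Ici x) x :=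
  (hf (max a x) (le_max_left a x)).comp (continuous_const.max continuous_id).continuousWithinAt
    fun _ hu => max_le_max_left a hu

theorem integrableOn_Icc_of_continuousWithinAt_Ici {f : ℝ → ℝ} {b C : ℝ}
    (hf : ∀ x ∈ Ici a, ContinuousWithinAt f (Ici x) x) (hC : ∀ x ∈ Icc a b, ‖f x‖ ≤ C) :
    IntegrableOn f (Icc a b) := by
  have hmax : Measurable fun u => f (max a u) :=
    measurable_of_continuousWithinAt_Ici (continuousWithinAt_Ici_comp_max hf)
  refine .of_bound measure_Icc_lt_top (hmax.aestronglyMeasurable.congr ?_) C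
    (ae_restrict_of_forall_mem measurableSet_Icc hC)
  exact ae_restrict_of_forall_mem measurableSet_Icc fun x hx => by simp only [max_eq_right hx.1]

end RightContinuous

theorem lipschitzOnWith_of_dist_le_mul_sub {M : Type*} [PseudoMetricSpace M] {c : ℝ → M}
    {s : Set ℝ} {K : NNReal} (h : ∀ x ∈ s, ∀ y ∈ s, x ≤ y → dist (c x) (c y) ≤ K * (y - x)) :
    LipschitzOnWith K c s := by
  refine LipschitzOnWith.of_dist_le_mul fun x hx y hy => ?_
  rcases le_total x y with hxy | hyx
  · rw [Real.dist_eq, abs_of_nonpos (sub_nonpos.2 hxy), neg_sub]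
    exact h x hx y hy hxy
  · rw [dist_comm, Real.dist_eq, abs_of_nonneg (sub_nonneg.2 hyx)]
    exact h y hy x hx hyx

theorem dist_le_integral_of_dist_le_mul_sub {M : Type*} [PseudoMetricSpace M] {c : ℝ → M}
    {f : ℝ → ℝ} {a b : ℝ} (hab : a ≤ b) (hf : ∀ x ∈ Ici a, ContinuousWithinAt f (Ici x) x)
    (hfb : Bornology.IsBounded (f '' Icc a b))
    (hc : ∀ x ∈ Ico a b, ∀ y ∈ Ioc x b, dist (c x) (c y) ≤ (y - x) * f x) :
    dist (c a) (c b) ≤ ∫ s in a..b, f s := by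
  obtain ⟨C, hC⟩ := hfb.exists_norm_le
  have hCf : ∀ x ∈ Icc a b, ‖f x‖ ≤ C := fun x hx => hC _ (mem_image_of_mem f hx)
  have hint : IntegrableOn f (Icc a b) := integrableOn_Icc_of_continuousWithinAt_Ici hf hCf
  have hlip : LipschitzOnWith C.toNNReal c (Icc a b) :=
    lipschitzOnWith_of_dist_le_mul_sub fun x hx y hy hxy => by
      rcases hxy.eq_or_lt with rfl | hxy
      · simp
      calc dist (c x) (c y) ≤ (y - x) * f x := hc x ⟨hx.1, hxy.trans_le hy.2⟩ y ⟨hxy, hy.2⟩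
        _ ≤ (y - x) * C := by gcongr; exact (le_abs_self _).trans (hCf x hx)
        _ ≤ C.toNNReal * (y - x) := by rw [mul_comm]; gcongr; exact C.le_coe_toNNReal
  have hprim : ContinuousOn (fun u => ∫ s in a..u, f s) (Icc a b) := by
    rw [← uIcc_of_le hab] at hint ⊢
    exact intervalIntegral.continuousOn_primitive_interval hint
  refine image_le_of_liminf_slope_right_le_deriv_boundary (f := fun u => dist (c a) (c u))
    (B' := f) ((continuous_const.dist continuous_id).comp_continuousOn hlip.continuousOn)
    (by simp) hprim (fun x hx => ?_) (fun x hx r hr => ?_) ⟨hab, le_rfl⟩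
  · refine intervalIntegral.integral_hasDerivWithinAt_right (t := Ioi x)
      ((intervalIntegrable_iff_integrableOn_Icc_of_le hx.1).2
        (hint.mono_set (Icc_subset_Icc le_rfl hx.2.le)))
      ⟨_, Ioo_mem_nhdsGT hx.2, (hint.mono_set (Ioo_subset_Icc_self.trans (Icc_subset_Icc hx.1 le_rfl))).1⟩
      ((hf x hx.1).mono Ioi_subset_Ici_self)
  · refine Eventually.frequently ?_
    filter_upwards [Ioo_mem_nhdsGT hx.2] with y hy
    rw [slope_def_field, div_lt_iff₀ (sub_pos.2 hy.1)]
    calc dist (c a) (c y) - dist (c a) (c x) ≤ dist (c x) (c y) := by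
          linarith [dist_triangle (c a) (c x) (c y)]
      _ ≤ (y - x) * f x := hc x hx y ⟨hy.1, hy.2.le⟩
      _ < r * (y - x) := by rw [mul_comm]; gcongr; linarith [hy.1]

theorem stmt19_general {M : Type*} [MetricSpace M]
    (E : M → ℝ) (c : ℝ → M)
    (hrc : ∀ t : ℝ, 0 < t →
      ContinuousWithinAt (fun u => descSlope E (c u)) (Set.Ici t) t)
    (hbdd : ∀ a b : ℝ, 0 < a → a ≤ b →
      BddAbove ((fun u => descSlope E (c u)) '' Set.Icc a b))
    (hsup : ∀ t s : ℝ, 0 < t → 0 < s →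
      dist (c t) (c (t + s)) ≤ s * descSlope E (c t)) :
    ∀ t t' : ℝ, 0 < t → t < t' →
      dist (c t) (c t') ≤ ∫ s in t..t', descSlope E (c s) := by
  intro t t' ht htt'
  have hbddBelow : BddBelow ((fun u => descSlope E (c u)) '' Icc t t') :=
    ⟨0, forall_mem_image.2 fun _ _ => le_max_right _ _⟩
  refine dist_le_integral_of_dist_le_mul_sub htt'.le
    (fun x hx => hrc x (ht.trans_le hx))
    (isBounded_iff_bddBelow_bddAbove.2 ⟨hbddBelow, hbdd t t' ht htt'.le⟩) fun x hx y hy => ?_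
  simpa using hsup x (y - x) (ht.trans_le hx.1) (sub_pos.2 hy.1)

/-- Length estimate for the gradient flow curve: if `s ↦ |∇₋E|(c(s))` is
right-continuous and bounded on compact subintervals of `(0,∞)`, and
`d(c(t), c(t+s)) ≤ s·|∇₋E|(c(t))` for all `t, s > 0`, then
`d(c(t), c(t')) ≤ ∫_t^{t'} |∇₋E|(c(s)) ds`. -/
theorem stmt19 {M : Type*} [MetricSpace M] [CompleteSpace M]
    (E : M → ℝ) (c : ℝ → M)
    (hrc : ∀ t : ℝ, 0 < t →
      ContinuousWithinAt (fun u => descSlope E (c u)) (Set.Ici t) t)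
    (hbdd : ∀ a b : ℝ, 0 < a → a ≤ b →
      BddAbove ((fun u => descSlope E (c u)) '' Set.Icc a b))
    (hsup : ∀ t s : ℝ, 0 < t → 0 < s →
      dist (c t) (c (t + s)) ≤ s * descSlope E (c t)) :
    ∀ t t' : ℝ, 0 < t → t < t' →
      dist (c t) (c t') ≤ ∫ s in t..t', descSlope E (c s) :=
  stmt19_general E c hrc hbdd hsup
end
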